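/- arXiv:1909.03499 — 7 statements merged into one kernel-verified Lean document; each statement's English description precedes it below -/
import Mathlib

section
/- If q is a root of unity with ℓ minimal such that q^{2ℓ} = 1, and m, m' are positive integers, then the ratio [(m+m')ℓ]_q / [m'ℓ]_q, interpreted as a limit, equals [m+m']_{q^ℓ} / [m']_{q^ℓ} and is nonzero. -/
/-- The q-number `[m]_q = q^{m-1} + q^{m-3} + ... + q^{1-m}`. -/
noncomputable def qnum (q : ℂ) (m : ℕ) : ℂ :=
  ∑ j ∈ Finset.range m, q ^ ((m : ℤ) - 1 - 2 * (j : ℤ))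

set_option linter.unusedVariables false

lemma qnum_eq (z : ℂ) (hz : z ≠ 0) (n : ℕ) :
    qnum z n = z ^ ((1 : ℤ) - n) * ∑ k ∈ Finset.range n, (z ^ 2) ^ k := by
  unfold qnum
  rw [Finset.mul_sum, ← Finset.sum_range_reflect (fun k => z ^ ((1:ℤ) - n) * (z^2)^k)]
  apply Finset.sum_congr rfl
  intro j hj
  have hj' : j < n := Finset.mem_range.mp hj
  rw [← zpow_natCast (z^2), ← zpow_ofNat z 2, ← zpow_mul, ← zpow_add₀ hz]
  congr 1
  have h1 : ((n - 1 - j : ℕ) : ℤ) = n - 1 - j := by omega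
  rw [h1]; ring

lemma geom_factor (w : ℂ) (l n : ℕ) :
    ∑ k ∈ Finset.range (n * l), w ^ k
      = (∑ k ∈ Finset.range l, w ^ k) * ∑ j ∈ Finset.range n, (w ^ l) ^ j := by
  induction n with
  | zero => simp
  | succ n ih =>
    have h2 : ∑ x ∈ Finset.range l, w ^ (n * l + x)
        = w ^ (n * l) * ∑ x ∈ Finset.range l, w ^ x := by
      rw [Finset.mul_sum]; exact Finset.sum_congr rfl fun x _ => pow_add w _ _
    rw [Nat.succ_mul, Finset.sum_range_add, ih, Finset.sum_range_succ, h2, mul_add,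
      ← pow_mul, mul_comm l n]
    ring

/-- If `q` is a root of unity with `ℓ` minimal such that `q^{2ℓ} = 1` and `m, m'` are
positive integers, then the ratio `[(m+m')ℓ]_q / [m'ℓ]_q`, interpreted as a limit,
equals `[m+m']_{q^ℓ} / [m']_{q^ℓ}` and is nonzero. -/
theorem qnum_ratio_limit (q : ℂ) (hq : q ≠ 0) (ℓ : ℕ) (hℓ : 0 < ℓ)
    (hroot : q ^ (2 * ℓ) = 1) (hmin : ∀ j : ℕ, 0 < j → q ^ (2 * j) = 1 → ℓ ≤ j)
    (m m' : ℕ) (hm : 0 < m) (hm' : 0 < m') :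
    qnum (q ^ ℓ) (m + m') / qnum (q ^ ℓ) m' ≠ 0 ∧
    Filter.Tendsto (fun z : ℂ => qnum z ((m + m') * ℓ) / qnum z (m' * ℓ))
      (nhdsWithin q {z : ℂ | qnum z (m' * ℓ) ≠ 0})
      (nhds (qnum (q ^ ℓ) (m + m') / qnum (q ^ ℓ) m')) := by
  have hql : q ^ ℓ ≠ 0 := pow_ne_zero _ hq
  have h1 : (q ^ ℓ) ^ 2 = 1 := by rw [← pow_mul, mul_comm]; exact hroot
  have hmm' : ((m + m' : ℕ) : ℂ) ≠ 0 := Nat.cast_ne_zero.mpr (by omega)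
  have hm'c : ((m' : ℕ) : ℂ) ≠ 0 := Nat.cast_ne_zero.mpr (by omega)
  have hv : ∀ r : ℕ, qnum (q ^ ℓ) r = (q ^ ℓ) ^ ((1 : ℤ) - r) * r := by
    intro r; rw [qnum_eq _ hql, h1]; simp
  -- the auxiliary continuous function
  set A : ℂ → ℂ := fun z => ∑ j ∈ Finset.range (m + m'), (z ^ (2 * ℓ)) ^ j with hA
  set B : ℂ → ℂ := fun z => ∑ j ∈ Finset.range m', (z ^ (2 * ℓ)) ^ j with hB
  set g : ℂ → ℂ := fun z => (z ^ (m * ℓ))⁻¹ * (A z / B z) with hg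
  have hAq : A q = (m + m' : ℕ) := by simp [hA, hroot]
  have hBq : B q = (m' : ℕ) := by simp [hB, hroot]
  have key : (q ^ ℓ) ^ ((1 : ℤ) - (m + m' : ℕ))
      = (q ^ ℓ) ^ ((1 : ℤ) - (m' : ℕ)) * (q ^ (m * ℓ))⁻¹ := by
    have hp : q ^ (m * ℓ) = (q ^ ℓ) ^ m := by rw [mul_comm, pow_mul]
    rw [hp, ← zpow_natCast (q ^ ℓ) m, ← zpow_neg, ← zpow_add₀ hql]
    congr 1; push_cast; ring
  have hTg : qnum (q ^ ℓ) (m + m') / qnum (q ^ ℓ) m' = g q := by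
    have ha : (q ^ ℓ) ^ ((1 : ℤ) - (m' : ℕ)) ≠ 0 := zpow_ne_zero _ hql
    rw [hv, hv, hg]
    simp only [hAq, hBq, key]
    rw [mul_assoc, mul_div_mul_left _ _ ha, mul_div_assoc]
  constructor
  · rw [hTg, hg]
    refine mul_ne_zero (inv_ne_zero (pow_ne_zero _ hq)) (div_ne_zero ?_ ?_)
    · rw [hAq]; exact hmm'
    · rw [hBq]; exact hm'c
  · rw [hTg]
    have hBq' : B q ≠ 0 := by rw [hBq]; exact hm'c
    have hAcont : Continuous A := continuous_finset_sum _ fun i _ => by fun_prop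
    have hBcont : Continuous B := continuous_finset_sum _ fun i _ => by fun_prop
    have hcont : ContinuousAt g q := by
      apply ContinuousAt.mul
      · exact ContinuousAt.inv₀ (continuousAt_pow q _ |>.congr (by rfl)) (pow_ne_zero _ hq)
      · exact ContinuousAt.div hAcont.continuousAt hBcont.continuousAt hBq'
    have hg_tendsto : Filter.Tendsto g
        (nhdsWithin q {z : ℂ | qnum z (m' * ℓ) ≠ 0}) (nhds (g q)) :=
      hcont.continuousWithinAt.tendsto
    refine Filter.Tendsto.congr' ?_ hg_tendsto
    have h0 : ∀ᶠ z : ℂ in nhdsWithin q {z : ℂ | qnum z (m' * ℓ) ≠ 0}, z ≠ 0 :=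
      Filter.Eventually.filter_mono nhdsWithin_le_nhds (eventually_ne_nhds hq)
    have hSmem : ∀ᶠ z : ℂ in nhdsWithin q {z : ℂ | qnum z (m' * ℓ) ≠ 0},
        qnum z (m' * ℓ) ≠ 0 := eventually_mem_nhdsWithin
    filter_upwards [h0, hSmem] with z hz0 hzS
    have hz2 : (z ^ 2) ^ ℓ = z ^ (2 * ℓ) := (pow_mul z 2 ℓ).symm
    have hden : qnum z (m' * ℓ)
        = z ^ ((1 : ℤ) - (m' * ℓ : ℕ)) * ((∑ k ∈ Finset.range ℓ, (z ^ 2) ^ k) * B z) := by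
      rw [qnum_eq z hz0, geom_factor, hz2]
    have hnum : qnum z ((m + m') * ℓ)
        = z ^ ((1 : ℤ) - ((m + m') * ℓ : ℕ)) * ((∑ k ∈ Finset.range ℓ, (z ^ 2) ^ k) * A z) := by
      rw [qnum_eq z hz0, geom_factor, hz2]
    rw [hden] at hzS
    have ha : z ^ ((1 : ℤ) - (m' * ℓ : ℕ)) ≠ 0 := zpow_ne_zero _ hz0
    have hSl : (∑ k ∈ Finset.range ℓ, (z ^ 2) ^ k) ≠ 0 := by
      intro h; apply hzS; rw [h]; ring
    have hBz : B z ≠ 0 := by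
      intro h; apply hzS; rw [h]; ring
    have key2 : z ^ ((1 : ℤ) - ((m + m') * ℓ : ℕ))
        = z ^ ((1 : ℤ) - (m' * ℓ : ℕ)) * (z ^ (m * ℓ))⁻¹ := by
      rw [← zpow_natCast z (m * ℓ), ← zpow_neg, ← zpow_add₀ hz0]
      congr 1; push_cast; ring
    rw [hg, hden, hnum, key2,
      mul_assoc (z ^ ((1 : ℤ) - (m' * ℓ : ℕ))), mul_div_mul_left _ _ ha,
      mul_div_assoc, mul_div_mul_left _ _ hSl]
end

section
/- For n ≥ 1 and 0 ≤ d ≤ n with d ≡ n (mod 2), the number of monic (n,d)-diagrams equals binom(n, (n−d)/2) − binom(n, (n−d−2)/2), where binom(n,k) = 0 for k < 0. -/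
set_option linter.unusedVariables false
set_option linter.unnecessarySeqFocus false

/-- The binomial coefficient `binom(n,k)` for `k : ℤ`, set to `0` when `k < 0`. -/
def binomZ (n : ℕ) (k : ℤ) : ℤ :=
  if k < 0 then 0 else (n.choose k.toNat : ℤ)

/-- A monic `(n,d)`-diagram: a non-crossing pairing (fixed-point-free involution,
with no crossing links) of the `n` left points `0,…,n-1` and the `d` right points
`n,…,n+d-1` of a rectangle, in which all `d` right points are endpoints of
through lines (i.e. are matched to left points). -/
def IsMonicDiagram (n d : ℕ) (f : Fin (n + d) → Fin (n + d)) : Prop :=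
  Function.Involutive f ∧ (∀ i, f i ≠ i) ∧
    (∀ i j : Fin (n + d), (i : ℕ) < (j : ℕ) → (j : ℕ) < (f i : ℕ) →
      ¬ ((f i : ℕ) < (f j : ℕ))) ∧
    ∀ i : Fin (n + d), n ≤ (i : ℕ) → (f i : ℕ) < n

/-- ℕ-valued version of a monic diagram. -/
def NDiag (n d : ℕ) (f : ℕ → ℕ) : Prop :=
  (∀ i, f (f i) = i) ∧
  (∀ i, i < n + d → f i ≠ i) ∧
  (∀ i, n + d ≤ i → f i = i) ∧
  (∀ i, i < n + d → f i < n + d) ∧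
  (∀ i j, i < j → j < f i → ¬ (f i < f j)) ∧
  (∀ i, n ≤ i → i < n + d → f i < n)

def extFun (m : ℕ) (f : Fin m → Fin m) : ℕ → ℕ :=
  fun i => if h : i < m then (f ⟨i, h⟩ : ℕ) else i

lemma extFun_ndiag (n d : ℕ) (f : Fin (n + d) → Fin (n + d)) (hf : IsMonicDiagram n d f) :
    NDiag n d (extFun (n + d) f) := by
  obtain ⟨h1, h2, h3, h4⟩ := hf
  refine ⟨?_, ?_, ?_, ?_, ?_, ?_⟩
  · intro i
    by_cases h : i < n + d
    · simp only [extFun, dif_pos h, Fin.is_lt, dif_pos, Fin.eta]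
      rw [h1 ⟨i, h⟩]
    · simp [extFun, dif_neg h]
  · intro i h hc
    simp only [extFun, dif_pos h] at hc
    exact h2 ⟨i, h⟩ (Fin.ext hc)
  · intro i h; simp [extFun, Nat.not_lt.2 h]
  · intro i h; simp only [extFun, dif_pos h]; exact (f ⟨i, h⟩).is_lt
  · intro i j hij hj
    by_cases hi : i < n + d
    · simp only [extFun, dif_pos hi] at hj ⊢
      by_cases hjlt : j < n + d
      · simp only [dif_pos hjlt]
        exact h3 ⟨i, hi⟩ ⟨j, hjlt⟩ hij hj
      · simp only [dif_neg hjlt]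
        exact fun hc => absurd hj (Nat.not_lt.2 (Nat.le_of_lt hc))
    · simp only [extFun, dif_neg hi] at hj; omega
  · intro i hni hi
    simp only [extFun, dif_pos hi]
    exact h4 ⟨i, hi⟩ hni

def resFun (m : ℕ) (F : ℕ → ℕ) (hF : ∀ i, i < m → F i < m) : Fin m → Fin m :=
  fun i => ⟨F i, hF i i.is_lt⟩

noncomputable def diagEquiv (n d : ℕ) :
    {f : Fin (n + d) → Fin (n + d) // IsMonicDiagram n d f} ≃ {f : ℕ → ℕ // NDiag n d f} := by
  refine Equiv.ofBijective (fun f => ⟨extFun (n + d) f.1, extFun_ndiag n d f.1 f.2⟩) ⟨?_, ?_⟩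
  · rintro ⟨f, hf⟩ ⟨g, hg⟩ h
    simp only [Subtype.mk.injEq] at h ⊢
    funext i
    have := congrFun h (i : ℕ)
    simp only [extFun, dif_pos i.is_lt, Fin.eta] at this
    exact Fin.ext this
  · rintro ⟨F, hF⟩
    obtain ⟨h1, h2, h3, h4, h5, h6⟩ := hF
    refine ⟨⟨resFun (n + d) F h4, ?_, ?_, ?_, ?_⟩, ?_⟩
    · intro i; exact Fin.ext (h1 i)
    · intro i hc; exact h2 i i.is_lt (congrArg Fin.val hc)
    · intro i j hij hj; exact h5 i j hij hj
    · intro i hni; exact h6 i hni i.is_lt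
    · apply Subtype.ext
      funext i
      by_cases h : i < n + d
      · simp [extFun, resFun, dif_pos h]
      · simp [extFun, dif_neg h, h3 i (Nat.not_lt.1 h)]

section
variable {n d : ℕ} {f : ℕ → ℕ}
lemma NDiag.inj (h : NDiag n d f) : Function.Injective f :=
  Function.LeftInverse.injective h.1

lemma NDiag.le (h : NDiag n d f) : d ≤ n := by
  have hinj : Function.Injective (fun i : Fin d => (⟨f (n + i), h.2.2.2.2.2 (n + i) (by omega) (by omega)⟩ : Fin n)) := by
    intro a b hab
    simp only [Fin.mk.injEq] at hab
    have := h.inj hab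
    omega
  simpa using Fintype.card_le_of_injective _ hinj

/-- The second case: the last left point `n` of an `(n+1, d)`-diagram is matched to
another left point iff `f` is an `(n, d+1)`-diagram. -/
lemma secondCase (n d : ℕ) (f : ℕ → ℕ) :
    (NDiag (n + 1) d f ∧ f n < n + 1) ↔ NDiag n (d + 1) f := by
  constructor
  · rintro ⟨⟨h1, h2, h3, h4, h5, h6⟩, hfn⟩
    have hkey : f n < n := by
      have := h2 n (by omega); omega
    refine ⟨h1, ?_, ?_, ?_, h5, ?_⟩
    · intro i hi; exact h2 i (by omega)
    · intro i hi; exact h3 i (by omega)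
    · intro i hi; have := h4 i (by omega); omega
    · intro i hni hi
      rcases Nat.lt_or_ge i (n + 1) with hc | hc
      · have : i = n := by omega
        exact this ▸ hkey
      · have h6' := h6 i hc (by omega)
        rcases Nat.lt_or_eq_of_le (Nat.lt_succ_iff.mp h6') with h' | h'
        · exact h'
        · exfalso
          have : f (f i) = i := h1 i
          rw [h'] at this
          omega
  · rintro ⟨h1, h2, h3, h4, h5, h6⟩
    have hfn : f n < n := h6 n le_rfl (by omega)
    exact ⟨⟨h1, fun i hi => h2 i (by omega), fun i hi => h3 i (by omega),
      fun i hi => by have := h4 i (by omega); omega, h5,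
      fun i hni hi => by have := h6 i (by omega) (by omega); omega⟩, by omega⟩

/-- If the last left point of an `(n+1, d+1)`-diagram is a through point, it is
matched to the first right point. -/
lemma through_val (n d : ℕ) (f : ℕ → ℕ) (hf : NDiag (n + 1) (d + 1) f)
    (h : n + 1 ≤ f n) : f n = n + 1 := by
  obtain ⟨h1, h2, h3, h4, h5, h6⟩ := hf
  by_contra hne
  have hfn : n + 2 ≤ f n := by omega
  have ha : f (n + 1) < n + 1 := h6 (n + 1) le_rfl (by omega)
  have han : f (n + 1) ≠ n := by
    intro hc
    have := h1 (n + 1)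
    rw [hc] at this
    omega
  have hfa : f (f (n + 1)) = n + 1 := h1 (n + 1)
  have := h5 (f (n + 1)) n (by omega) (by omega)
  rw [hfa] at this
  omega


lemma through_val' (n d : ℕ) (f : ℕ → ℕ) (hf : NDiag (n + 1) (d + 1) f)
    (h : n + 1 ≤ f n) : f n = n + 1 := by
  obtain ⟨h1, h2, h3, h4, h5, h6⟩ := hf
  by_contra hne
  have hfn : n + 2 ≤ f n := by omega
  have ha : f (n + 1) < n + 1 := h6 (n + 1) le_rfl (by omega)
  have han : f (n + 1) ≠ n := by
    intro hc
    have := h1 (n + 1)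
    rw [hc] at this
    omega
  have hfa : f (f (n + 1)) = n + 1 := h1 (n + 1)
  have := h5 (f (n + 1)) n (by omega) (by omega)
  rw [hfa] at this
  omega

/-- Insertion of a gap `{n, n+1}` into `ℕ`. -/
def eS (n i : ℕ) : ℕ := if i < n then i else i + 2
/-- Collapse of the gap `{n, n+1}`. -/
def rS (n j : ℕ) : ℕ := if j < n then j else j - 2

variable {n d : ℕ} {f g : ℕ → ℕ}

lemma eS_lt_iff {i j : ℕ} : eS n i < eS n j ↔ i < j := by unfold eS; split_ifs <;> omega
lemma eS_ne {i : ℕ} : eS n i ≠ n ∧ eS n i ≠ n + 1 := by unfold eS; split_ifs <;> omega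
lemma rS_eS {i : ℕ} : rS n (eS n i) = i := by unfold eS rS; split_ifs <;> omega
lemma eS_rS {j : ℕ} (h1 : j ≠ n) (h2 : j ≠ n + 1) : eS n (rS n j) = j := by
  unfold eS rS; split_ifs <;> omega
lemma eS_big {i : ℕ} (h : n ≤ i) : eS n i = i + 2 := by unfold eS; split_ifs <;> omega
lemma rS_big {j : ℕ} (h : n + 2 ≤ j) : rS n j = j - 2 := by unfold rS; split_ifs <;> omega
lemma rS_lt {j : ℕ} (h1 : j ≠ n) (h2 : j ≠ n + 1) (h3 : j < n + d + 2) : rS n j < n + d := by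
  unfold rS; split_ifs <;> omega

lemma NDiag.fS (hf : NDiag (n + 1) (d + 1) f) (hfn : f n = n + 1) {x : ℕ}
    (h1 : x ≠ n) (h2 : x ≠ n + 1) : f x ≠ n ∧ f x ≠ n + 1 := by
  have hx := hf.1 x
  have hn := hf.1 n
  rw [hfn] at hn
  constructor
  · intro hc; rw [hc] at hx; omega
  · intro hc; rw [hc, hn] at hx; omega

lemma fn1 (hf : NDiag (n + 1) (d + 1) f) (hfn : f n = n + 1) : f (n + 1) = n := by
  have := hf.1 n; rw [hfn] at this; exact this

/-- The detachment map. -/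
def detach (n : ℕ) (f : ℕ → ℕ) (i : ℕ) : ℕ := rS n (f (eS n i))

lemma Gmap (hf : NDiag (n + 1) (d + 1) f) (hfn : f n = n + 1) :
    NDiag n d (detach n f) := by
  obtain ⟨h1, h2, h3, h4, h5, h6⟩ := hf
  have hS : ∀ x, x ≠ n → x ≠ n + 1 → f x ≠ n ∧ f x ≠ n + 1 :=
    fun x hx1 hx2 => NDiag.fS ⟨h1, h2, h3, h4, h5, h6⟩ hfn hx1 hx2
  have hfe : ∀ i : ℕ, f (eS n i) ≠ n ∧ f (eS n i) ≠ n + 1 :=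
    fun i => hS _ eS_ne.1 eS_ne.2
  have key : ∀ i : ℕ, eS n (detach n f i) = f (eS n i) :=
    fun i => eS_rS (hfe i).1 (hfe i).2
  have heb : ∀ i : ℕ, i < n + d → eS n i < n + 1 + (d + 1) := by
    intro i hi; unfold eS; split_ifs <;> omega
  refine ⟨?_, ?_, ?_, ?_, ?_, ?_⟩
  · intro i
    show rS n (f (eS n (detach n f i))) = i
    rw [key i, h1 (eS n i), rS_eS]
  · intro i hi hc
    have hc' : eS n (detach n f i) = eS n i := by rw [hc]
    rw [key i] at hc'
    exact h2 (eS n i) (heb i hi) hc'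
  · intro i hi
    show rS n (f (eS n i)) = i
    rw [h3 (eS n i) (by rw [eS_big (by omega)]; omega), rS_eS]
  · intro i hi
    show rS n (f (eS n i)) < n + d
    have h4' : f (eS n i) < n + 1 + (d + 1) := h4 _ (heb i hi)
    have := (hfe i).1; have := (hfe i).2
    unfold rS; split_ifs <;> omega
  · intro i j hij hj hc
    have hj' : eS n j < f (eS n i) := by rw [← key i]; exact eS_lt_iff.mpr hj
    have hc' : f (eS n i) < f (eS n j) := by
      rw [← key i, ← key j]; exact eS_lt_iff.mpr hc
    exact h5 (eS n i) (eS n j) (eS_lt_iff.mpr hij) hj' hc'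
  · intro i hni hi
    show rS n (f (eS n i)) < n
    have h6' : f (eS n i) < n + 1 := by
      apply h6
      · rw [eS_big (by omega)]; omega
      · rw [eS_big (by omega)]; omega
    have := (hfe i).1
    unfold rS; split_ifs <;> omega

/-- The reattachment map. -/
def reatt (n : ℕ) (g : ℕ → ℕ) (j : ℕ) : ℕ :=
  if j = n then n + 1 else if j = n + 1 then n else eS n (g (rS n j))

lemma reatt_ne {j : ℕ} (h1 : j ≠ n) (h2 : j ≠ n + 1) :
    reatt n g j = eS n (g (rS n j)) := by unfold reatt; simp [h1, h2]
lemma reatt_n : reatt n g n = n + 1 := by simp [reatt]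
lemma reatt_n1 : reatt n g (n + 1) = n := by simp [reatt]

lemma Fmap (hg : NDiag n d g) : NDiag (n + 1) (d + 1) (reatt n g) := by
  obtain ⟨h1, h2, h3, h4, h5, h6⟩ := hg
  have hrb : ∀ j : ℕ, j ≠ n → j ≠ n + 1 → j < n + 1 + (d + 1) → rS n j < n + d := by
    intro j hj1 hj2 hj3; exact rS_lt hj1 hj2 (by omega)
  refine ⟨?_, ?_, ?_, ?_, ?_, ?_⟩
  · intro j
    by_cases hn0 : j = n
    · simp [reatt, hn0]
    by_cases hn1 : j = n + 1
    · simp [reatt, hn1]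
    rw [reatt_ne hn0 hn1, reatt_ne eS_ne.1 eS_ne.2, rS_eS, h1, eS_rS hn0 hn1]
  · intro j hj hc
    by_cases hn0 : j = n
    · rw [hn0, reatt_n] at hc; omega
    by_cases hn1 : j = n + 1
    · rw [hn1, reatt_n1] at hc; omega
    rw [reatt_ne hn0 hn1] at hc
    have hgr : g (rS n j) = rS n j := by
      have h := congrArg (rS n) hc
      rwa [rS_eS] at h
    exact h2 (rS n j) (hrb j hn0 hn1 hj) hgr
  · intro j hj
    have hn0 : j ≠ n := by omega
    have hn1 : j ≠ n + 1 := by omega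
    rw [reatt_ne hn0 hn1, rS_big (by omega), h3 (j - 2) (by omega), eS_big (by omega)]
    omega
  · intro j hj
    by_cases hn0 : j = n
    · rw [hn0, reatt_n]; omega
    by_cases hn1 : j = n + 1
    · rw [hn1, reatt_n1]; omega
    rw [reatt_ne hn0 hn1]
    have := h4 (rS n j) (hrb j hn0 hn1 hj)
    unfold eS; split_ifs <;> omega
  · intro i j hij hj hc
    by_cases hi0 : i = n
    · rw [hi0, reatt_n] at hj; omega
    by_cases hi1 : i = n + 1
    · rw [hi1] at hj hij; rw [reatt_n1] at hj; omega
    rw [reatt_ne hi0 hi1] at hj hc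
    by_cases hj0 : j = n
    · rw [hj0] at hj hc
      rw [reatt_n] at hc
      have h := @eS_ne n (g (rS n i))
      omega
    by_cases hj1 : j = n + 1
    · rw [hj1] at hj hc
      rw [reatt_n1] at hc
      have h := @eS_ne n (g (rS n i))
      omega
    rw [reatt_ne hj0 hj1] at hc
    have hrij : rS n i < rS n j := by unfold rS; split_ifs <;> omega
    have hj' : rS n j < g (rS n i) := by
      rw [← eS_lt_iff (n := n), eS_rS hj0 hj1]
      exact hj
    exact h5 (rS n i) (rS n j) hrij hj' (eS_lt_iff.mp hc)
  · intro j hnj hj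
    by_cases hn1 : j = n + 1
    · rw [hn1, reatt_n1]; omega
    have hn0 : j ≠ n := by omega
    rw [reatt_ne hn0 hn1, rS_big (by omega)]
    have := h6 (j - 2) (by omega) (by omega)
    unfold eS; split_ifs <;> omega

noncomputable def throughEquiv (n d : ℕ) :
    {f : ℕ → ℕ // NDiag (n + 1) (d + 1) f ∧ n + 1 ≤ f n} ≃ {g : ℕ → ℕ // NDiag n d g} where
  toFun := fun x => ⟨detach n x.1,
    Gmap x.2.1 (through_val' n d x.1 x.2.1 x.2.2)⟩
  invFun := fun y => ⟨reatt n y.1, Fmap y.2, by simp [reatt]⟩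
  left_inv := by
    rintro ⟨f, hf, hfn⟩
    have hv : f n = n + 1 := through_val' n d f hf hfn
    apply Subtype.ext
    funext j
    show reatt n (detach n f) j = f j
    by_cases hn0 : j = n
    · rw [hn0]; simp [reatt, hv]
    by_cases hn1 : j = n + 1
    · rw [hn1]; simp [reatt, fn1 hf hv]
    rw [reatt_ne hn0 hn1]
    show eS n (rS n (f (eS n (rS n j)))) = f j
    rw [eS_rS hn0 hn1]
    exact eS_rS (hf.fS hv hn0 hn1).1 (hf.fS hv hn0 hn1).2
  right_inv := by
    rintro ⟨g, hg⟩
    apply Subtype.ext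
    funext i
    show detach n (reatt n g) i = g i
    unfold detach
    rw [reatt_ne eS_ne.1 eS_ne.2, rS_eS, rS_eS]

end

section
variable {α : Type*}

lemma card_split (P Q : α → Prop) [Finite {x // P x}] :
    Nat.card {x // P x} = Nat.card {x // P x ∧ Q x} + Nat.card {x // P x ∧ ¬ Q x} := by
  classical
  haveI : Finite {x // P x ∧ Q x} :=
    Finite.of_injective (fun y : {x // P x ∧ Q x} => (⟨y.1, y.2.1⟩ : {x // P x}))
      (by intro a b h; simp only [Subtype.mk.injEq] at h; exact Subtype.ext h)
  haveI : Finite {x // P x ∧ ¬ Q x} :=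
    Finite.of_injective (fun y : {x // P x ∧ ¬ Q x} => (⟨y.1, y.2.1⟩ : {x // P x}))
      (by intro a b h; simp only [Subtype.mk.injEq] at h; exact Subtype.ext h)
  have e : {x // P x ∧ Q x} ⊕ {x // P x ∧ ¬ Q x} ≃ {x // P x} :=
    { toFun := Sum.elim (fun y => ⟨y.1, y.2.1⟩) (fun y => ⟨y.1, y.2.1⟩)
      invFun := fun x => if h : Q x.1 then .inl ⟨x.1, x.2, h⟩ else .inr ⟨x.1, x.2, h⟩
      left_inv := by rintro (⟨x, hp, hq⟩ | ⟨x, hp, hq⟩) <;> simp [hq]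
      right_inv := by rintro ⟨x, hp⟩; by_cases h : Q x <;> simp [h] }
  rw [← Nat.card_congr e, Nat.card_sum]

lemma binomZ_pascal' (n : ℕ) (k : ℤ) :
    (if k < 0 then (0:ℤ) else ((n+1).choose k.toNat : ℤ))
      = (if k < 0 then (0:ℤ) else (n.choose k.toNat : ℤ))
        + (if k - 1 < 0 then (0:ℤ) else (n.choose (k-1).toNat : ℤ)) := by
  rcases lt_trichotomy k 0 with h | h | h
  · rw [if_pos h, if_pos h, if_pos (by omega)]; ring
  · subst h
    norm_num
  · rw [if_neg (by omega), if_neg (by omega), if_neg (by omega)]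
    obtain ⟨m, hm⟩ : ∃ m : ℕ, k = (m : ℤ) + 1 := ⟨(k - 1).toNat, by omega⟩
    have h1 : k.toNat = m + 1 := by omega
    have h2 : (k - 1).toNat = m := by omega
    rw [h1, h2, Nat.choose_succ_succ]
    push_cast
    ring

lemma choose_mid (m : ℕ) : (2*m+1).choose (m+1) = (2*m+1).choose m := by
  have := Nat.choose_symm (show m ≤ 2*m+1 by omega)
  rwa [show 2*m+1-m = m+1 from by omega] at this

end

/-! ### Counting -/

noncomputable instance ndiagFinite (n d : ℕ) : Finite {f : ℕ → ℕ // NDiag n d f} :=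
  Finite.of_equiv _ (diagEquiv n d)

/-- The number of monic `(n,d)`-diagrams. -/
noncomputable def Dn (n d : ℕ) : ℕ := Nat.card {f : ℕ → ℕ // NDiag n d f}

lemma Dn_rec (n d : ℕ) : Dn (n + 1) (d + 1) = Dn n d + Dn n (d + 2) := by
  unfold Dn
  rw [card_split (NDiag (n + 1) (d + 1)) (fun f => n + 1 ≤ f n)]
  congr 1
  · exact Nat.card_congr (throughEquiv n d)
  · apply Nat.card_congr
    apply Equiv.subtypeEquivRight
    intro f
    rw [show (¬ n + 1 ≤ f n) ↔ f n < n + 1 from by omega]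
    exact secondCase n (d + 1) f

lemma Dn_zero (n : ℕ) : Dn (n + 1) 0 = Dn n 1 := by
  unfold Dn
  apply Nat.card_congr
  apply Equiv.subtypeEquivRight
  intro f
  constructor
  · intro hf
    exact (secondCase n 0 f).mp ⟨hf, hf.2.2.2.1 n (by omega)⟩
  · intro hf
    exact ((secondCase n 0 f).mpr hf).1

lemma Dn_eq_zero {n d : ℕ} (h : n < d) : Dn n d = 0 := by
  unfold Dn
  have : IsEmpty {f : ℕ → ℕ // NDiag n d f} := ⟨fun x => absurd x.2.le (by omega)⟩
  exact Nat.card_of_isEmpty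

lemma Dn_base : Dn 0 0 = 1 := by
  unfold Dn
  haveI : Nonempty {f : ℕ → ℕ // NDiag 0 0 f} :=
    ⟨⟨fun i => i, fun i => rfl, fun i hi => absurd hi (by omega),
      fun i _ => rfl, fun i hi => absurd hi (by omega),
      fun i j hij hji _ => absurd (show j < i from hji) (by omega),
      fun i _ h2 => absurd h2 (by omega)⟩⟩
  haveI : Subsingleton {f : ℕ → ℕ // NDiag 0 0 f} := by
    constructor
    rintro ⟨a, ha⟩ ⟨b, hb⟩
    apply Subtype.ext
    funext i
    show a i = b i
    rw [ha.2.2.1 i (by omega), hb.2.2.1 i (by omega)]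
  exact Nat.card_unique

/-! ### Binomial arithmetic -/

lemma binomZ_pascal (n : ℕ) (k : ℤ) : binomZ (n + 1) k = binomZ n k + binomZ n (k - 1) := by
  unfold binomZ
  exact binomZ_pascal' n k

lemma binomZ_mid (m : ℕ) : binomZ (2 * m + 1) ((m : ℤ) + 1) = binomZ (2 * m + 1) (m : ℤ) := by
  unfold binomZ
  rw [if_neg (by omega), if_neg (by omega)]
  rw [show ((m : ℤ) + 1).toNat = m + 1 from by omega, show ((m : ℤ)).toNat = m from by omega]
  exact_mod_cast congrArg (Nat.cast (R := ℤ)) (choose_mid m)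

lemma Dn_formula : ∀ n d : ℕ, d % 2 = n % 2 →
    (Dn n d : ℤ) = binomZ n (((n : ℤ) - d) / 2) - binomZ n (((n : ℤ) - d - 2) / 2) := by
  intro n
  induction n with
  | zero =>
    intro d hpar
    by_cases h0 : d = 0
    · subst h0
      rw [Dn_base]
      norm_num [binomZ]
    · rw [Dn_eq_zero (by omega)]
      unfold binomZ
      rw [if_pos (by omega), if_pos (by omega)]
      norm_num
  | succ n ih =>
    intro d hpar
    by_cases hd0 : d = 0
    · subst hd0
      obtain ⟨m, rfl⟩ : ∃ m, n = 2 * m + 1 := ⟨n / 2, by omega⟩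
      rw [Dn_zero, ih 1 (by omega)]
      have e1 : (((2 * m + 1 : ℕ) : ℤ) - ((1 : ℕ) : ℤ)) / 2 = (m : ℤ) := by push_cast; omega
      have e2 : (((2 * m + 1 : ℕ) : ℤ) - ((1 : ℕ) : ℤ) - 2) / 2 = (m : ℤ) - 1 := by
        push_cast; omega
      have e3 : (((2 * m + 1 + 1 : ℕ) : ℤ) - ((0 : ℕ) : ℤ)) / 2 = (m : ℤ) + 1 := by
        push_cast; omega
      have e4 : (((2 * m + 1 + 1 : ℕ) : ℤ) - ((0 : ℕ) : ℤ) - 2) / 2 = (m : ℤ) := by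
        push_cast; omega
      rw [e1, e2, e3, e4]
      conv_rhs => rw [binomZ_pascal (2 * m + 1) ((m : ℤ) + 1), binomZ_pascal (2 * m + 1) (m : ℤ)]
      rw [show (m : ℤ) + 1 - 1 = (m : ℤ) from by ring, binomZ_mid]
      ring
    · obtain ⟨e, rfl⟩ : ∃ e, d = e + 1 := ⟨d - 1, by omega⟩
      rw [Dn_rec n e, Nat.cast_add, ih e (by omega), ih (e + 2) (by omega)]
      have hpar' : ((n : ℤ) - e) % 2 = 0 := by omega
      set k := ((n : ℤ) - (e : ℤ)) / 2 with hk
      have h1 : ((n : ℤ) - (e : ℤ) - 2) / 2 = k - 1 := by omega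
      have h2 : ((n : ℤ) - ((e + 2 : ℕ) : ℤ)) / 2 = k - 1 := by push_cast; omega
      have h3 : ((n : ℤ) - ((e + 2 : ℕ) : ℤ) - 2) / 2 = k - 2 := by push_cast; omega
      have h4 : (((n + 1 : ℕ) : ℤ) - ((e + 1 : ℕ) : ℤ)) / 2 = k := by push_cast; omega
      have h5 : (((n + 1 : ℕ) : ℤ) - ((e + 1 : ℕ) : ℤ) - 2) / 2 = k - 1 := by push_cast; omega
      rw [h1, h2, h3, h4, h5, binomZ_pascal, binomZ_pascal]
      ring

/-- For `n ≥ 1` and `0 ≤ d ≤ n` with `d ≡ n (mod 2)`, the number of monic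
`(n,d)`-diagrams equals `binom(n,(n−d)/2) − binom(n,(n−d−2)/2)`. -/
theorem card_monicDiagram (n d : ℕ) (hn : 1 ≤ n) (hd : d ≤ n) (hpar : d % 2 = n % 2) :
    (Nat.card {f : Fin (n + d) → Fin (n + d) // IsMonicDiagram n d f} : ℤ)
      = binomZ n (((n : ℤ) - d) / 2) - binomZ n (((n : ℤ) - d - 2) / 2) := by
  rw [Nat.card_congr (diagEquiv n d)]
  exact Dn_formula n d hpar
end

section
/- The dimension of the seam algebra B_{n,k}, namely binom(2n, n) − binom(2n, n−k−1), equals the sum over d ∈ Δ_{n,k} of (dim S_{n,k}^d)², where dim S_{n,k}^d = binom(n, (n+k−d)/2) − binom(n, (n−k−d−2)/2) and Δ_{n,k} = {d : 0 ≤ d ≤ n+k, d ≡ n+k (mod 2), n+d ≥ k}. -/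
open Finset

/-- `dim S_{n,k}^d = binom(n,(n+k−d)/2) − binom(n,(n−k−d−2)/2)`, the dimension of the
cellular module over the seam algebra `B_{n,k}` (set to `0` outside `Δ_{n,k}`). -/
def dimSeam (n k d : ℕ) : ℤ :=
  if d ≤ n + k ∧ k ≤ n + d then
    binomZ n (((n : ℤ) + k - d) / 2) - binomZ n (((n : ℤ) - k - d - 2) / 2)
  else 0

lemma binomZ_natCast (n j : ℕ) : binomZ n (j : ℤ) = (n.choose j : ℤ) := by
  simp [binomZ]

lemma binomZ_cast_sub (n j c : ℕ) :
    binomZ n ((j:ℤ) - c) = if j < c then 0 else (n.choose (j - c) : ℤ) := by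
  unfold binomZ
  rcases lt_or_ge j c with h | h
  · rw [if_pos (by omega), if_pos h]
  · rw [if_neg (by omega), if_neg (by omega)]
    congr 2
    omega

lemma vand (n t : ℕ) (ht : t ≤ n) :
    ∑ i ∈ range (n+1), n.choose i * n.choose (i + t) = (2*n).choose (n - t) := by
  have h := Nat.add_choose_eq n n (n - t)
  rw [Finset.Nat.sum_antidiagonal_eq_sum_range_succ_mk] at h
  have h2 : (2*n).choose (n-t) = ∑ i ∈ range (n - t + 1), n.choose i * n.choose (n - t - i) := by
    rw [← h]; congr 1; omega
  rw [h2]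
  have h3 : ∑ i ∈ range (n - t + 1), n.choose i * n.choose (n - t - i)
      = ∑ i ∈ range (n - t + 1), n.choose i * n.choose (i + t) := by
    apply Finset.sum_congr rfl
    intro i hi
    simp only [mem_range] at hi
    congr 1
    rw [← Nat.choose_symm (show i + t ≤ n by omega)]
    congr 1
    omega
  rw [h3]
  exact (Finset.sum_subset (Finset.range_subset_range.2 (by omega : n - t + 1 ≤ n + 1))
    (fun x hx hx' => by
      simp only [mem_range] at hx hx'
      rw [Nat.choose_eq_zero_of_lt (by omega : n < x + t), Nat.mul_zero])).symm

lemma bform (n k j : ℕ) :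
    binomZ n ((j:ℤ) - k - 1) = if j < k + 1 then 0 else (n.choose (j - (k+1)) : ℤ) := by
  have h : ((j:ℤ) - k - 1) = (j:ℤ) - ((k+1 : ℕ) : ℤ) := by push_cast; ring
  rw [h, binomZ_cast_sub]

lemma shift_sum (n k : ℕ) (q : ℕ → ℤ) :
    ∑ j ∈ range (n+k+2), (if j < k + 1 then 0 else q (j - (k+1)))
      = ∑ i ∈ range (n+1), q i := by
  rw [range_eq_Ico, ← Finset.sum_Ico_consecutive _ (Nat.zero_le (k+1)) (by omega : k+1 ≤ n+k+2)]
  have h1 : ∑ j ∈ Ico 0 (k+1), (if j < k + 1 then (0:ℤ) else q (j - (k+1))) = 0 := by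
    apply Finset.sum_eq_zero
    intro j hj
    simp only [mem_Ico] at hj
    rw [if_pos (by omega)]
  rw [h1, zero_add, Finset.sum_Ico_eq_sum_range,
    show n + k + 2 - (k+1) = n + 1 from by omega]
  apply Finset.sum_congr (by rw [range_eq_Ico])
  intro i _
  rw [if_neg (by omega)]
  congr 1
  omega

lemma total (n k : ℕ) :
    ∑ j ∈ range (n+k+2), ((n.choose j : ℤ) - binomZ n ((j:ℤ) - k - 1)) ^ 2
      = 2 * ((2*n).choose n : ℤ) - 2 * binomZ (2*n) ((n:ℤ) - k - 1) := by
  have expand : ∀ j ∈ range (n+k+2), ((n.choose j : ℤ) - binomZ n ((j:ℤ) - k - 1)) ^ 2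
      = ((n.choose j : ℤ) * n.choose j)
        - 2 * ((n.choose j : ℤ) * binomZ n ((j:ℤ) - k - 1))
        + (binomZ n ((j:ℤ) - k - 1) * binomZ n ((j:ℤ) - k - 1)) := by
    intro j _; ring
  rw [Finset.sum_congr rfl expand, Finset.sum_add_distrib, Finset.sum_sub_distrib,
    ← Finset.mul_sum]
  have Sext : ∑ i ∈ range (n+1), (n.choose i : ℤ) * n.choose i = ((2*n).choose n : ℤ) := by
    have h0 := vand n 0 (Nat.zero_le n)
    simp only [Nat.add_zero, Nat.sub_zero] at h0
    exact_mod_cast h0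
  have S1 : ∑ j ∈ range (n+k+2), (n.choose j : ℤ) * n.choose j = ((2*n).choose n : ℤ) := by
    rw [← Sext]
    exact (Finset.sum_subset (Finset.range_subset_range.2 (by omega : n+1 ≤ n+k+2))
      (fun x hx hx' => by
        simp only [mem_range] at hx hx'
        rw [Nat.choose_eq_zero_of_lt (by omega : n < x)]; ring)).symm
  have S3 : ∑ j ∈ range (n+k+2), binomZ n ((j:ℤ) - k - 1) * binomZ n ((j:ℤ) - k - 1)
      = ((2*n).choose n : ℤ) := by
    have h : ∀ j ∈ range (n+k+2), binomZ n ((j:ℤ) - k - 1) * binomZ n ((j:ℤ) - k - 1)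
        = (if j < k + 1 then 0 else ((n.choose (j-(k+1)) : ℤ) * n.choose (j-(k+1)))) := by
      intro j _
      rw [bform]
      split <;> ring
    rw [Finset.sum_congr rfl h,
      shift_sum n k (fun m => ((n.choose m : ℤ) * n.choose m))]
    exact Sext
  have S2 : ∑ j ∈ range (n+k+2), (n.choose j : ℤ) * binomZ n ((j:ℤ) - k - 1)
      = binomZ (2*n) ((n:ℤ) - k - 1) := by
    have h : ∀ j ∈ range (n+k+2), (n.choose j : ℤ) * binomZ n ((j:ℤ) - k - 1)
        = (if j < k + 1 then 0 else ((n.choose ((j-(k+1)) + (k+1)) : ℤ) * n.choose (j-(k+1)))) := by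
      intro j _
      rw [bform]
      split_ifs with hj
      · ring
      · rw [show j - (k+1) + (k+1) = j by omega]
    rw [Finset.sum_congr rfl h,
      shift_sum n k (fun m => ((n.choose (m + (k+1)) : ℤ) * n.choose m))]
    show ∑ i ∈ range (n+1), ((n.choose (i + (k+1)) : ℤ) * n.choose i) = _
    rcases le_or_gt (k+1) n with hkn | hkn
    · have hv := vand n (k+1) hkn
      have : ∑ i ∈ range (n+1), ((n.choose (i + (k+1)) : ℤ) * n.choose i)
          = ((2*n).choose (n - (k+1)) : ℤ) := by
        push_cast [← hv]
        apply Finset.sum_congr rfl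
        intro i _
        ring
      rw [this]
      unfold binomZ
      rw [if_neg (by omega)]
      congr 2
      omega
    · have hz : ∑ i ∈ range (n+1), ((n.choose (i + (k+1)) : ℤ) * n.choose i) = 0 := by
        apply Finset.sum_eq_zero
        intro i _
        rw [Nat.choose_eq_zero_of_lt (by omega : n < i + (k+1))]
        push_cast; ring
      rw [hz]
      unfold binomZ
      rw [if_pos (by omega)]
  rw [S1, S2, S3]
  ring

lemma half_sum (g : ℕ → ℤ) (N : ℕ) (hg : ∀ j ≤ N, g (N - j) = - g j) :
    ∑ j ∈ range (N+1), g j ^ 2 = 2 * ∑ j ∈ range (N/2 + 1), g j ^ 2 := by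
  have key : ∑ j ∈ Ico (N/2+1) (N+1), g j ^ 2 = ∑ j ∈ range (N - N/2), g j ^ 2 := by
    apply Finset.sum_nbij' (fun j => N - j) (fun i => N - i)
    · intro a ha; simp only [mem_Ico] at ha; simp only [mem_range]; omega
    · intro a ha; simp only [mem_range] at ha; simp only [mem_Ico]; omega
    · intro a ha; simp only [mem_Ico] at ha; omega
    · intro a ha; simp only [mem_range] at ha; omega
    · intro a ha
      simp only [mem_Ico] at ha
      rw [hg a (by omega)]
      ring
  have hsplit : ∑ j ∈ range (N+1), g j ^ 2
      = ∑ j ∈ range (N/2+1), g j ^ 2 + ∑ j ∈ Ico (N/2+1) (N+1), g j ^ 2 := by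
    rw [range_eq_Ico, ← Finset.sum_Ico_consecutive (fun j => g j ^ 2)
      (Nat.zero_le (N/2+1)) (by omega : N/2+1 ≤ N+1), Nat.Ico_zero_eq_range]
  rw [hsplit, key]
  rcases Nat.even_or_odd N with he | ho
  · obtain ⟨t, ht⟩ := he
    have h0 : g (N/2) = 0 := by
      have h := hg (N/2) (by omega)
      rw [show N - N/2 = N/2 from by omega] at h
      linarith
    rw [show N - N/2 = N/2 from by omega, Finset.sum_range_succ _ (N/2), h0]
    ring
  · obtain ⟨t, ht⟩ := ho
    rw [show N - N/2 = N/2 + 1 from by omega]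
    ring

lemma F_antisym (n k : ℕ) : ∀ j ≤ n+k+1,
    (n.choose (n+k+1-j) : ℤ) - binomZ n (((n+k+1-j : ℕ) : ℤ) - k - 1)
      = -((n.choose j : ℤ) - binomZ n ((j:ℤ) - k - 1)) := by
  intro j hj
  rw [bform, bform]
  rcases le_or_gt j n with h1 | h1 <;> rcases le_or_gt j k with h2 | h2
  · rw [if_neg (show ¬(n+k+1-j < k+1) by omega), if_pos (show j < k+1 by omega),
      Nat.choose_eq_zero_of_lt (show n < n+k+1-j by omega),
      show n+k+1-j-(k+1) = n - j from by omega,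
      Nat.choose_symm h1]
    push_cast; ring
  · rw [if_neg (show ¬(n+k+1-j < k+1) by omega), if_neg (show ¬(j < k+1) by omega),
      show n+k+1-j = n - (j-(k+1)) from by omega,
      Nat.choose_symm (show j - (k+1) ≤ n by omega),
      show n - (j-(k+1)) - (k+1) = n - j from by omega,
      Nat.choose_symm h1]
    push_cast; ring
  · rw [if_pos (show n+k+1-j < k+1 by omega), if_pos (show j < k+1 by omega),
      Nat.choose_eq_zero_of_lt (show n < n+k+1-j by omega),
      Nat.choose_eq_zero_of_lt h1]
    push_cast
  · rw [if_pos (show n+k+1-j < k+1 by omega), if_neg (show ¬(j < k+1) by omega),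
      show n+k+1-j = n - (j-(k+1)) from by omega,
      Nat.choose_symm (show j - (k+1) ≤ n by omega),
      Nat.choose_eq_zero_of_lt h1]
    push_cast; ring

lemma reindex (n k : ℕ) :
    ∑ d ∈ (Finset.range (n + k + 1)).filter
        (fun d => d % 2 = (n + k) % 2 ∧ k ≤ n + d), (dimSeam n k d) ^ 2
      = ∑ j ∈ range ((n+k)/2 + 1), ((n.choose j : ℤ) - binomZ n ((j:ℤ) - k - 1)) ^ 2 := by
  have step1 : ∑ d ∈ (Finset.range (n + k + 1)).filter
        (fun d => d % 2 = (n + k) % 2 ∧ k ≤ n + d), (dimSeam n k d) ^ 2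
      = ∑ j ∈ (range ((n+k)/2 + 1)).filter (fun j => j ≤ n),
          ((n.choose j : ℤ) - binomZ n ((j:ℤ) - k - 1)) ^ 2 := by
    apply Finset.sum_nbij' (fun d => (n+k-d)/2) (fun j => n+k-2*j)
    · intro a ha
      simp only [mem_filter, mem_range] at ha ⊢
      omega
    · intro a ha
      simp only [mem_filter, mem_range] at ha ⊢
      omega
    · intro a ha
      simp only [mem_filter, mem_range] at ha
      omega
    · intro a ha
      simp only [mem_filter, mem_range] at ha
      omega
    · intro d hd
      simp only [mem_filter, mem_range] at hd
      unfold dimSeam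
      rw [if_pos ⟨by omega, by omega⟩]
      have e1 : ((n:ℤ) + k - d) / 2 = (((n+k-d)/2 : ℕ) : ℤ) := by
        rw [show ((n:ℤ) + k - d) = 2 * (((n+k-d)/2 : ℕ) : ℤ) from by omega,
          Int.mul_ediv_cancel_left _ (by norm_num)]
      have e2 : ((n:ℤ) - k - d - 2) / 2 = (((n+k-d)/2 : ℕ) : ℤ) - k - 1 := by
        rw [show ((n:ℤ) - k - d - 2) = 2 * ((((n+k-d)/2 : ℕ) : ℤ) - k - 1) from by omega,
          Int.mul_ediv_cancel_left _ (by norm_num)]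
      rw [e1, e2, binomZ_natCast]
  rw [step1]
  apply Finset.sum_subset (Finset.filter_subset _ _)
  intro x hx hx'
  simp only [mem_filter, mem_range] at hx hx'
  have hx2 : 2 * x ≤ n + k := by omega
  have hxn : n < x := by
    by_contra h
    exact hx' ⟨hx, by omega⟩
  rw [bform, Nat.choose_eq_zero_of_lt hxn, if_pos (show x < k + 1 by omega)]
  norm_num

/-- The dimension of the seam algebra `B_{n,k}`, namely
`binom(2n,n) − binom(2n,n−k−1)`, equals `∑_{d ∈ Δ_{n,k}} (dim S_{n,k}^d)²`, where
`Δ_{n,k} = {d : 0 ≤ d ≤ n+k, d ≡ n+k (mod 2), n+d ≥ k}`. -/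
theorem dim_seamAlgebra_eq_sum_sq (n k : ℕ) (hn : 1 ≤ n) (hk : 2 ≤ k) :
    binomZ (2 * n) (n : ℤ) - binomZ (2 * n) ((n : ℤ) - k - 1)
      = ∑ d ∈ (Finset.range (n + k + 1)).filter
          (fun d => d % 2 = (n + k) % 2 ∧ k ≤ n + d), (dimSeam n k d) ^ 2 := by
  have hg : ∀ j ≤ n+k+1,
      (fun j => (n.choose j : ℤ) - binomZ n ((j:ℤ) - k - 1)) (n+k+1-j)
        = -((fun j => (n.choose j : ℤ) - binomZ n ((j:ℤ) - k - 1)) j) := F_antisym n k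
  have hhalf := half_sum (fun j => (n.choose j : ℤ) - binomZ n ((j:ℤ) - k - 1)) (n+k+1) hg
  beta_reduce at hhalf
  rw [show n+k+1+1 = n+k+2 from rfl] at hhalf
  have htot := total n k
  have hbridge : ∑ j ∈ range ((n+k+1)/2 + 1), ((n.choose j : ℤ) - binomZ n ((j:ℤ) - k - 1)) ^ 2
      = ∑ j ∈ range ((n+k)/2 + 1), ((n.choose j : ℤ) - binomZ n ((j:ℤ) - k - 1)) ^ 2 := by
    rcases Nat.even_or_odd (n+k) with he | ho
    · obtain ⟨t, ht⟩ := he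
      rw [show (n+k+1)/2 = (n+k)/2 from by omega]
    · obtain ⟨t, ht⟩ := ho
      have h0 : (n.choose ((n+k)/2+1) : ℤ) - binomZ n ((((n+k)/2+1 : ℕ):ℤ) - k - 1) = 0 := by
        have h := F_antisym n k ((n+k)/2+1) (by omega)
        rw [show n+k+1-((n+k)/2+1) = (n+k)/2+1 from by omega] at h
        linarith
      rw [show (n+k+1)/2 + 1 = ((n+k)/2+1) + 1 from by omega, Finset.sum_range_succ, h0]
      ring
  rw [reindex n k, binomZ_natCast (2*n) n]
  rw [hbridge] at hhalf
  linarith [hhalf, htot]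
end

section
/- Let P be a finite forest (a finite poset in which, for every x, the set of elements ≥ x is totally ordered, i.e. if x ≤ y and x ≤ z then y ≤ z or z ≤ y). For y ∈ P let h_y be the number of elements ≤ y. Then the rational function H_P(q) = [n]_q! / ∏_{y∈P} [h_y]_q, with n = |P|, is a Laurent polynomial in q with integer coefficients. -/
/-- The q-number `[m]_q = q^{m-1} + q^{m-3} + ... + q^{1-m}` as a Laurent polynomial
with integer coefficients. -/
noncomputable def qnumL (m : ℕ) : LaurentPolynomial ℤ :=
  ∑ j ∈ Finset.range m, LaurentPolynomial.T ((m : ℤ) - 1 - 2 * (j : ℤ))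

/-- The q-factorial `[n]_q! = [1]_q [2]_q ⋯ [n]_q` as a Laurent polynomial. -/
noncomputable def qfacL (n : ℕ) : LaurentPolynomial ℤ :=
  ∏ j ∈ Finset.range n, qnumL (j + 1)

open Polynomial Finset LaurentPolynomial

/-! ### Combinatorial part -/

section Comb
variable {P : Type*} [Fintype P] [PartialOrder P]
    (hforest : ∀ x y z : P, x ≤ y → x ≤ z → y ≤ z ∨ z ≤ y) (d : ℕ)

open Classical in
/-- The hook length of `y`: the number of elements `≤ y`. -/
noncomputable def hkAux (y : P) : ℕ := #(univ.filter (· ≤ y))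

open Classical in
/-- The set of `x` whose least upper bound in `S_d = {z : d ∣ h_z}` is `y`. -/
noncomputable def AyAux (y : P) : Finset P :=
  univ.filter (fun x => x ≤ y ∧ ∀ z : P, d ∣ hkAux z → x ≤ z → y ≤ z)

open Classical
include hforest

omit hforest in
lemma mem_AyAux_self {y : P} : y ∈ AyAux d y := by
  simp only [AyAux, mem_filter, mem_univ, true_and]
  exact ⟨le_rfl, fun z _ h => h⟩

lemma AyAux_disj {y y' : P} (hy : d ∣ hkAux y) (hy' : d ∣ hkAux y') (hne : y ≠ y') :
    Disjoint (AyAux d y) (AyAux d y') := by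
  rw [Finset.disjoint_left]
  intro x hx hx'
  simp only [AyAux, mem_filter, mem_univ, true_and] at hx hx'
  exact hne (le_antisymm (hx.2 y' hy' hx'.1) (hx'.2 y hy hx.1))

lemma downset_eq_biUnion {y : P} (hy : d ∣ hkAux y) :
    univ.filter (· ≤ y) =
      (univ.filter (fun z => d ∣ hkAux z ∧ z ≤ y)).biUnion (AyAux d) := by
  ext x
  simp only [mem_filter, mem_univ, true_and, mem_biUnion]
  constructor
  · intro hxy
    have hne : (univ.filter (fun z : P => d ∣ hkAux z ∧ x ≤ z)).Nonempty :=
      ⟨y, by simp [hxy, hy]⟩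
    obtain ⟨m, hm, hmin⟩ := Finset.exists_minimal hne
    simp only [mem_filter, mem_univ, true_and] at hm
    have hmle : ∀ z : P, d ∣ hkAux z → x ≤ z → m ≤ z := by
      intro z hz hxz
      rcases hforest x m z hm.2 hxz with h | h
      · exact h
      · rcases eq_or_lt_of_le h with h' | h'
        · exact h'.ge
        · exact absurd h' (not_lt_of_ge (hmin (by simp [hz, hxz]) h'.le))
    refine ⟨m, ⟨hm.1, hmle y hy hxy⟩, ?_⟩
    simp only [AyAux, mem_filter, mem_univ, true_and]
    exact ⟨hm.2, hmle⟩
  · rintro ⟨z, ⟨hz, hzy⟩, hx⟩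
    simp only [AyAux, mem_filter, mem_univ, true_and] at hx
    exact hx.1.trans hzy

lemma hkAux_eq_sum {y : P} (hy : d ∣ hkAux y) :
    hkAux y = ∑ z ∈ univ.filter (fun z => d ∣ hkAux z ∧ z ≤ y), #(AyAux d z) := by
  rw [hkAux, downset_eq_biUnion hforest d hy, Finset.card_biUnion]
  intro a ha b hb hab
  simp only [Finset.mem_coe, mem_filter] at ha hb
  exact AyAux_disj hforest d ha.2.1 hb.2.1 hab

lemma dvd_card_AyAux : ∀ y : P, d ∣ hkAux y → d ∣ #(AyAux d y) := by
  intro y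
  induction y using WellFoundedLT.induction with
  | ind y ih =>
    intro hy
    have hsplit : univ.filter (fun z => d ∣ hkAux z ∧ z ≤ y) =
        insert y (univ.filter (fun z => d ∣ hkAux z ∧ z < y)) := by
      ext z
      simp only [mem_filter, mem_univ, true_and, mem_insert]
      constructor
      · rintro ⟨h1, h2⟩
        rcases eq_or_lt_of_le h2 with h | h
        · exact Or.inl h
        · exact Or.inr ⟨h1, h⟩
      · rintro (rfl | ⟨h1, h2⟩)
        · exact ⟨hy, le_rfl⟩
        · exact ⟨h1, h2.le⟩
    have hnot : y ∉ univ.filter (fun z => d ∣ hkAux z ∧ z < y) := by simp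
    have hsum := hkAux_eq_sum hforest d hy
    rw [hsplit, Finset.sum_insert hnot] at hsum
    have hdvd_sum : d ∣ ∑ z ∈ univ.filter (fun z => d ∣ hkAux z ∧ z < y), #(AyAux d z) := by
      apply Finset.dvd_sum
      intro z hz
      simp only [mem_filter, mem_univ, true_and] at hz
      exact ih z hz.2 hz.1
    have hcard : #(AyAux d y) =
        hkAux y - ∑ z ∈ univ.filter (fun z => d ∣ hkAux z ∧ z < y), #(AyAux d z) := by
      omega
    rw [hcard]
    exact Nat.dvd_sub hy hdvd_sum

lemma forest_count :
    d * #(univ.filter (fun y : P => d ∣ hkAux y)) ≤ Fintype.card P := by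
  have h1 : ∀ y ∈ univ.filter (fun y : P => d ∣ hkAux y), d ≤ #(AyAux d y) := by
    intro y hy
    simp only [mem_filter, mem_univ, true_and] at hy
    refine Nat.le_of_dvd ?_ (dvd_card_AyAux hforest d y hy)
    exact Finset.card_pos.2 ⟨y, mem_AyAux_self d⟩
  calc d * #(univ.filter (fun y : P => d ∣ hkAux y))
      = ∑ y ∈ univ.filter (fun y : P => d ∣ hkAux y), d := by
        rw [Finset.sum_const, smul_eq_mul, mul_comm]
    _ ≤ ∑ y ∈ univ.filter (fun y : P => d ∣ hkAux y), #(AyAux d y) :=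
        Finset.sum_le_sum h1
    _ = #((univ.filter (fun y : P => d ∣ hkAux y)).biUnion (AyAux d)) := by
        rw [Finset.card_biUnion]
        intro a ha b hb hab
        simp only [Finset.mem_coe, mem_filter, mem_univ, true_and] at ha hb
        exact AyAux_disj hforest d ha hb hab
    _ ≤ Fintype.card P := Finset.card_le_univ _

end Comb

/-! ### Polynomial part -/

/-- The geometric sum `1 + X + ... + X^{m-1}` in `ℤ[X]`. -/
noncomputable def Gp (m : ℕ) : Polynomial ℤ := ∑ i ∈ Finset.range m, X ^ i

lemma Gp_eq_prod {m n : ℕ} (h1 : 1 ≤ m) (h2 : m ≤ n) :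
    Gp m = ∏ i ∈ (Finset.Icc 2 n).filter (· ∣ m), cyclotomic i ℤ := by
  rw [Gp, ← Polynomial.prod_cyclotomic_eq_geom_sum h1]
  congr 1
  ext i
  simp only [Finset.mem_erase, Nat.mem_divisors, Finset.mem_filter, Finset.mem_Icc]
  constructor
  · rintro ⟨hi1, hid, hm0⟩
    have := Nat.le_of_dvd (by omega) hid
    have := Nat.pos_of_dvd_of_pos hid (by omega)
    exact ⟨⟨by omega, by omega⟩, hid⟩
  · rintro ⟨⟨hi2, hin⟩, hid⟩
    exact ⟨by omega, hid, by omega⟩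

lemma dvd_of_counts {ι : Type*} (s : Finset ι) (h : ι → ℕ) (n : ℕ)
    (hpos : ∀ y ∈ s, 1 ≤ h y) (hle : ∀ y ∈ s, h y ≤ n)
    (hcount : ∀ i, 2 ≤ i → #(s.filter (fun y => i ∣ h y)) ≤ n / i) :
    (∏ y ∈ s, Gp (h y)) ∣ ∏ j ∈ Finset.range n, Gp (j + 1) := by
  classical
  have key : ∀ (m : ℕ), 1 ≤ m → m ≤ n →
      Gp m = ∏ i ∈ Finset.Icc 2 n, cyclotomic i ℤ ^ (if i ∣ m then 1 else 0) := by
    intro m h1 h2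
    rw [Gp_eq_prod h1 h2, Finset.prod_filter]
    congr 1
    ext i
    split <;> simp
  have lhs : (∏ y ∈ s, Gp (h y)) =
      ∏ i ∈ Finset.Icc 2 n, cyclotomic i ℤ ^ #(s.filter (fun y => i ∣ h y)) := by
    calc (∏ y ∈ s, Gp (h y))
        = ∏ y ∈ s, ∏ i ∈ Finset.Icc 2 n, cyclotomic i ℤ ^ (if i ∣ h y then 1 else 0) :=
          Finset.prod_congr rfl (fun y hy => key (h y) (hpos y hy) (hle y hy))
      _ = ∏ i ∈ Finset.Icc 2 n, ∏ y ∈ s, cyclotomic i ℤ ^ (if i ∣ h y then 1 else 0) :=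
          Finset.prod_comm
      _ = ∏ i ∈ Finset.Icc 2 n, cyclotomic i ℤ ^ (∑ y ∈ s, if i ∣ h y then 1 else 0) := by
          refine Finset.prod_congr rfl (fun i _ => ?_)
          rw [Finset.prod_pow_eq_pow_sum]
      _ = _ := by
          refine Finset.prod_congr rfl (fun i _ => ?_)
          rw [Finset.sum_boole, Nat.cast_id, Finset.card_filter]
  have rhs : (∏ j ∈ Finset.range n, Gp (j + 1)) =
      ∏ i ∈ Finset.Icc 2 n, cyclotomic i ℤ ^ (n / i) := by
    calc (∏ j ∈ Finset.range n, Gp (j + 1))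
        = ∏ j ∈ Finset.range n, ∏ i ∈ Finset.Icc 2 n,
            cyclotomic i ℤ ^ (if i ∣ j + 1 then 1 else 0) := by
          refine Finset.prod_congr rfl (fun j hj => key (j + 1) (by omega) ?_)
          simp only [Finset.mem_range] at hj; omega
      _ = ∏ i ∈ Finset.Icc 2 n, ∏ j ∈ Finset.range n,
            cyclotomic i ℤ ^ (if i ∣ j + 1 then 1 else 0) := Finset.prod_comm
      _ = ∏ i ∈ Finset.Icc 2 n,
            cyclotomic i ℤ ^ #((Finset.range n).filter (fun j => i ∣ j + 1)) := by
          refine Finset.prod_congr rfl (fun i _ => ?_)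
          rw [Finset.prod_pow_eq_pow_sum, Finset.sum_boole, Nat.cast_id, Finset.card_filter]
      _ = _ := by
          refine Finset.prod_congr rfl (fun i _ => ?_)
          rw [Nat.card_multiples]
  rw [lhs, rhs]
  exact Finset.prod_dvd_prod_of_dvd _ _ (fun i hi => by
    refine pow_dvd_pow _ (hcount i ?_)
    simp only [Finset.mem_Icc] at hi; exact hi.1)

/-! ### Laurent polynomial bridge -/

lemma qnumL_assoc (m : ℕ) :
    Associated (Polynomial.aeval (LaurentPolynomial.T 2 : LaurentPolynomial ℤ) (Gp m))
      (qnumL m) := by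
  refine ⟨(LaurentPolynomial.isUnit_T (1 - (m : ℤ))).unit, ?_⟩
  rw [IsUnit.unit_spec, Gp, map_sum, qnumL]
  calc (∑ j ∈ Finset.range m, Polynomial.aeval (T 2 : LaurentPolynomial ℤ) (X ^ j)) *
        T (1 - m)
      = ∑ j ∈ Finset.range m, T (2 * (j : ℤ) + (1 - m)) := by
        rw [Finset.sum_mul]
        refine Finset.sum_congr rfl (fun j _ => ?_)
        rw [map_pow, Polynomial.aeval_X, LaurentPolynomial.T_pow, LaurentPolynomial.T_add,
          mul_comm (2 : ℤ)]
    _ = ∑ j ∈ Finset.range m, T ((m : ℤ) - 1 - 2 * (j : ℤ)) := by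
        rw [← Finset.sum_range_reflect (fun j => T ((m : ℤ) - 1 - 2 * (j : ℤ))) m]
        refine Finset.sum_congr rfl (fun j hj => ?_)
        simp only [Finset.mem_range] at hj
        congr 1
        have hcast : ((m - 1 - j : ℕ) : ℤ) = (m : ℤ) - 1 - j := by omega
        rw [hcast]; ring

/-- Stanley's hook-length-type result: if `P` is a finite forest (a finite poset in
which `x ≤ y` and `x ≤ z` imply that `y` and `z` are comparable), and for `y ∈ P`
`h_y` denotes the number of elements `≤ y`, then the rational function
`H_P(q) = [n]_q! / ∏_{y∈P} [h_y]_q` (with `n = |P|`) is a Laurent polynomial with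
integer coefficients, i.e. `∏_{y∈P} [h_y]_q` divides `[n]_q!` in `ℤ[q,q⁻¹]`. -/
theorem forest_qfactorial_divisible (P : Type*) [Fintype P] [PartialOrder P]
    (hforest : ∀ x y z : P, x ≤ y → x ≤ z → y ≤ z ∨ z ≤ y) :
    (∏ y : P, qnumL (Nat.card {x : P // x ≤ y})) ∣ qfacL (Fintype.card P) := by
  classical
  have hcard : ∀ y : P, Nat.card {x : P // x ≤ y} = hkAux y := by
    intro y
    rw [Nat.card_eq_fintype_card, Fintype.card_subtype, hkAux]
  have hpos : ∀ y ∈ (univ : Finset P), 1 ≤ hkAux y := by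
    intro y _
    exact Finset.card_pos.2 ⟨y, by simp [hkAux]⟩
  have hle : ∀ y ∈ (univ : Finset P), hkAux y ≤ Fintype.card P := by
    intro y _
    exact (Finset.card_filter_le _ _).trans_eq (Finset.card_univ)
  have hcount : ∀ i, 2 ≤ i →
      #((univ : Finset P).filter (fun y => i ∣ hkAux y)) ≤ Fintype.card P / i := by
    intro i hi
    rw [Nat.le_div_iff_mul_le (by omega : 0 < i), mul_comm]
    exact forest_count hforest i
  have polydvd := dvd_of_counts univ hkAux (Fintype.card P) hpos hle hcount
  have A1 : Associated
      (Polynomial.aeval (T 2 : LaurentPolynomial ℤ) (∏ y : P, Gp (hkAux y)))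
      (∏ y : P, qnumL (hkAux y)) := by
    rw [map_prod]
    exact Associated.prod _ _ _ (fun y _ => qnumL_assoc (hkAux y))
  have A2 : Associated
      (Polynomial.aeval (T 2 : LaurentPolynomial ℤ)
        (∏ j ∈ Finset.range (Fintype.card P), Gp (j + 1)))
      (qfacL (Fintype.card P)) := by
    rw [map_prod, qfacL]
    exact Associated.prod _ _ _ (fun j _ => qnumL_assoc (j + 1))
  simp only [hcard]
  exact A1.symm.dvd.trans
    ((map_dvd (Polynomial.aeval (T 2 : LaurentPolynomial ℤ)) polydvd).trans A2.dvd)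
end

section
/- Let A be an algebra, e an idempotent, B = eAe, and let W be a finite-dimensional A-module equipped with a symmetric A-invariant bilinear form ⟨·,·⟩ (meaning ⟨a*v, w⟩ = ⟨v, aw⟩ for an anti-involution * with e* = e). If Rad(W) denotes the radical of the form on W and Rad(eW) the radical of its restriction to the B-module eW, then Rad(eW) = e·Rad(W). -/
/-- Let `A` be an algebra with anti-involution `σ`, `e` an idempotent with `σ e = e`,
and `W` a finite-dimensional `A`-module with a symmetric `A`-invariant bilinear form
(`⟨σ(a) v, w⟩ = ⟨v, a w⟩`). Then the radical of the restricted form on the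
`eAe`-module `eW` equals `e · Rad(W)`:
`Rad(eW) = {v : e•v = v, ⟨v,w⟩ = 0 ∀ w ∈ eW} = e • Rad(W)`. -/
theorem rad_corner_eq (K : Type*) [Field K] (A : Type*) [Ring A] [Algebra K A]
    (σ : A → A) (hσmul : ∀ a b : A, σ (a * b) = σ b * σ a)
    (e : A) (he : e * e = e) (hσe : σ e = e)
    (W : Type*) [AddCommGroup W] [Module K W] [Module A W] [IsScalarTower K A W]
    [FiniteDimensional K W]
    (B : W →ₗ[K] W →ₗ[K] K)
    (hsymm : ∀ v w : W, B v w = B w v)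
    (hinv : ∀ (a : A) (v w : W), B (σ a • v) w = B v (a • w)) :
    ∀ v : W,
      (e • v = v ∧ ∀ w : W, e • w = w → B v w = 0) ↔
        ∃ u : W, (∀ w : W, B u w = 0) ∧ v = e • u := by
  intro v
  constructor
  · rintro ⟨hv, hrad⟩
    refine ⟨v, ?_, hv.symm⟩
    intro w
    have : B v w = B v (e • w) := by
      conv_lhs => rw [← hv, ← hσe, hinv]
    rw [this]
    exact hrad (e • w) (by rw [← mul_smul, he])
  · rintro ⟨u, hu, rfl⟩
    constructor
    · rw [← mul_smul, he]
    · intro w _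
      rw [← hσe, hinv]
      exact hu _
end

section
/- In a cellular algebra A over an algebraically closed field, the decomposition matrix D with entries D_{d,e} = [W(d) : L(e)] (composition multiplicity of the irreducible L(e) in the cell module W(d)), indexed by d ∈ Δ and e ∈ Δ⁰ with the partial order on Δ, is upper unitriangular: D_{d,e} = 0 unless d ≤ e, and D_{d,d} = 1. -/
open scoped Classical

/-- A cellular datum `(Δ, M, C, *)` on an `R`-algebra `B`, in the sense of
Graham and Lehrer. -/
structure CellularDatum (R : Type*) [CommRing R] (B : Type*) [NonUnitalRing B]
    [Module R B] where
  Δ : Type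
  fintypeΔ : Fintype Δ
  po : PartialOrder Δ
  M : Δ → Type
  fintypeM : ∀ d, Fintype (M d)
  C : (d : Δ) → M d → M d → B
  basis : Module.Basis ((d : Δ) × (M d × M d)) R B
  basis_eq : ∀ (d : Δ) (s t : M d), basis ⟨d, (s, t)⟩ = C d s t
  star : B → B
  star_add : ∀ a b, star (a + b) = star a + star b
  star_smul : ∀ (r : R) (a : B), star (r • a) = r • star a
  star_mul : ∀ a b, star (a * b) = star b * star a
  star_star : ∀ a, star (star a) = a
  star_C : ∀ (d : Δ) (s t : M d), star (C d s t) = C d t s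
  coeff : B → (d : Δ) → M d → M d → R
  mul_C : ∀ (a : B) (d : Δ) (s t : M d),
    a * C d s t -
        (@Finset.univ (M d) (fintypeM d)).sum (fun s' => coeff a d s' s • C d s' t)
      ∈ Submodule.span R
          {x : B | ∃ (e : Δ) (p : M e) (q : M e), po.lt e d ∧ x = C e p q}

variable {R : Type*} [CommRing R] {B : Type*} [NonUnitalRing B] [Module R B]

/-- `r^d(s,t)`, the structure coefficient of the bilinear form on the cell module. -/
def rd (cd : CellularDatum R B) (d : cd.Δ) (s t : cd.M d) : R :=
  cd.coeff (cd.C d t t) d t s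

/-- The action of `a ∈ B` on the cell module `W(d) = R^{M(d)}`. -/
def cellAct (cd : CellularDatum R B) (d : cd.Δ) (a : B) (x : cd.M d → R) :
    cd.M d → R :=
  fun s' => (@Finset.univ (cd.M d) (cd.fintypeM d)).sum (fun s => cd.coeff a d s' s * x s)

/-- The bilinear form on the cell module `W(d)`, with `⟨v_s, v_t⟩ = r^d(s,t)`. -/
def cellForm (cd : CellularDatum R B) (d : cd.Δ) (x y : cd.M d → R) : R :=
  (@Finset.univ (cd.M d) (cd.fintypeM d)).sum (fun s =>
    (@Finset.univ (cd.M d) (cd.fintypeM d)).sum (fun t => rd cd d s t * x s * y t))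

/-- The subquotient `N'/N` attached to a pair of submodules `N ⊆ N'`. -/
abbrev Factor {A M : Type*} [Ring A] [AddCommGroup M] [Module A M]
    (N N' : Submodule A M) :=
  ↥N' ⧸ Submodule.comap N'.subtype N

section Aux

variable {K : Type} [Field K] {A : Type} [Ring A] [Algebra K A]

namespace CellularDatum

variable (cd : CellularDatum K A)

lemma sigma_mk_eq_iff {d : cd.Δ} {u v t t' : cd.M d} :
    (⟨d, (u, t)⟩ : (f : cd.Δ) × (cd.M f × cd.M f)) = ⟨d, (v, t')⟩ ↔ u = v ∧ t = t' := by
  constructor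
  · intro h
    have h2 : (u, t) = (v, t') := eq_of_heq (Sigma.mk.inj_iff.1 h).2
    exact ⟨congrArg Prod.fst h2, congrArg Prod.snd h2⟩
  · rintro ⟨rfl, rfl⟩; rfl

lemma not_lt_self (d : cd.Δ) : ¬ cd.po.lt d d := by
  letI := cd.po; exact lt_irrefl d

lemma repr_lower_eq_zero {d : cd.Δ} {x : A}
    (hx : x ∈ Submodule.span K
      {x : A | ∃ (e : cd.Δ) (p : cd.M e) (q : cd.M e), cd.po.lt e d ∧ x = cd.C e p q})
    {i : (f : cd.Δ) × (cd.M f × cd.M f)} (hi : ¬ cd.po.lt i.1 d) :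
    cd.basis.repr x i = 0 := by
  have hsub : {x : A | ∃ (e : cd.Δ) (p : cd.M e) (q : cd.M e), cd.po.lt e d ∧ x = cd.C e p q}
      ⊆ (cd.basis : _ → A) '' {j : (f : cd.Δ) × (cd.M f × cd.M f) | cd.po.lt j.1 d} := by
    rintro _ ⟨e, p, q, hlt, rfl⟩
    exact ⟨⟨e, (p, q)⟩, hlt, cd.basis_eq e p q⟩
  have hmem := Submodule.span_mono hsub hx
  rw [Module.Basis.mem_span_image] at hmem
  by_contra h
  exact hi (hmem (Finsupp.mem_support_iff.2 h))

lemma repr_mul (a : A) (d : cd.Δ) (s t : cd.M d)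
    (i : (f : cd.Δ) × (cd.M f × cd.M f)) (hi : ¬ cd.po.lt i.1 d) :
    cd.basis.repr (a * cd.C d s t) i
      = (@Finset.univ (cd.M d) (cd.fintypeM d)).sum
          (fun s' => if (⟨d, (s', t)⟩ : (f : cd.Δ) × (cd.M f × cd.M f)) = i
            then cd.coeff a d s' s else 0) := by
  have hdec : a * cd.C d s t
      = (@Finset.univ (cd.M d) (cd.fintypeM d)).sum
          (fun s' => cd.coeff a d s' s • cd.C d s' t)
        + (a * cd.C d s t
            - (@Finset.univ (cd.M d) (cd.fintypeM d)).sum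
                (fun s' => cd.coeff a d s' s • cd.C d s' t)) := by abel
  rw [hdec, map_add, Finsupp.add_apply, cd.repr_lower_eq_zero (cd.mul_C a d s t) hi, add_zero,
    map_sum, Finsupp.finset_sum_apply]
  refine Finset.sum_congr rfl fun s' _ => ?_
  rw [← cd.basis_eq d s' t, map_smul, Finsupp.smul_apply, Module.Basis.repr_self,
    Finsupp.single_apply]
  by_cases h : (⟨d, (s', t)⟩ : (f : cd.Δ) × (cd.M f × cd.M f)) = i <;> simp [h]

lemma coeff_eq_repr (a : A) (d : cd.Δ) (s' s t : cd.M d) :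
    cd.coeff a d s' s = cd.basis.repr (a * cd.C d s t) ⟨d, (s', t)⟩ := by
  letI := cd.fintypeM d
  rw [cd.repr_mul a d s t ⟨d, (s', t)⟩ (cd.not_lt_self d)]
  symm
  refine Finset.sum_eq_single s' (fun u _ hu => if_neg ?_) (fun h => absurd (Finset.mem_univ _) h) |>.trans (if_pos rfl)
  rw [cd.sigma_mk_eq_iff]
  exact fun hc => hu hc.1

def starL : A →ₗ[K] A where
  toFun := cd.star
  map_add' := cd.star_add
  map_smul' := fun r a => by simpa using cd.star_smul r a

lemma sigma_swap_eq_iff {f e : cd.Δ} (u v : cd.M f) (p q : cd.M e) :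
    (⟨f, (v, u)⟩ : (g : cd.Δ) × (cd.M g × cd.M g)) = ⟨e, (p, q)⟩
      ↔ (⟨f, (u, v)⟩ : (g : cd.Δ) × (cd.M g × cd.M g)) = ⟨e, (q, p)⟩ := by
  constructor <;> intro h <;>
    · have hf : f = e := congrArg Sigma.fst h
      subst hf
      obtain ⟨h1, h2⟩ := cd.sigma_mk_eq_iff.1 h
      subst h1; subst h2; rfl

lemma repr_star (x : A) (e : cd.Δ) (p q : cd.M e) :
    cd.basis.repr (cd.star x) ⟨e, (p, q)⟩ = cd.basis.repr x ⟨e, (q, p)⟩ := by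
  have key : (Finsupp.lapply (⟨e, (p, q)⟩ : (g : cd.Δ) × (cd.M g × cd.M g))).comp
        ((cd.basis.repr.toLinearMap).comp cd.starL)
      = (Finsupp.lapply (⟨e, (q, p)⟩ : (g : cd.Δ) × (cd.M g × cd.M g))).comp
        cd.basis.repr.toLinearMap := by
    refine cd.basis.ext fun i => ?_
    obtain ⟨f, u, v⟩ := i
    have hst : cd.star (cd.basis ⟨f, (u, v)⟩) = cd.basis ⟨f, (v, u)⟩ := by
      rw [cd.basis_eq, cd.star_C, cd.basis_eq]
    simp only [LinearMap.comp_apply, LinearEquiv.coe_toLinearMap, Finsupp.lapply_apply]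
    show cd.basis.repr (cd.starL (cd.basis ⟨f, (u, v)⟩)) ⟨e, (p, q)⟩ = _
    have : cd.starL (cd.basis ⟨f, (u, v)⟩) = cd.basis ⟨f, (v, u)⟩ := hst
    rw [this, Module.Basis.repr_self, Module.Basis.repr_self, Finsupp.single_apply, Finsupp.single_apply]
    by_cases h : (⟨f, (v, u)⟩ : (g : cd.Δ) × (cd.M g × cd.M g)) = ⟨e, (p, q)⟩
    · rw [if_pos h, if_pos ((cd.sigma_swap_eq_iff u v p q).1 h)]
    · rw [if_neg h, if_neg (fun hc => h ((cd.sigma_swap_eq_iff u v p q).2 hc))]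
  have := LinearMap.congr_fun key x
  simp at this
  exact this

lemma coeff_C_of_not_le {d e : cd.Δ} (h : ¬ cd.po.le d e) (p q : cd.M e) (s' s : cd.M d) :
    cd.coeff (cd.C e p q) d s' s = 0 := by
  letI := cd.po
  have hne : d ≠ e := fun heq => h (le_of_eq heq)
  have hnlt : ¬ cd.po.lt d e := fun hlt => h hlt.le
  rw [cd.coeff_eq_repr _ d s' s s]
  have hstar : cd.C e p q * cd.C d s s = cd.star (cd.C d s s * cd.C e q p) := by
    rw [cd.star_mul, cd.star_C, cd.star_C]
  rw [hstar, cd.repr_star, cd.repr_mul (cd.C d s s) e q p ⟨d, (s, s')⟩ hnlt]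
  exact Finset.sum_eq_zero fun u _ => if_neg fun hc => hne (congrArg Sigma.fst hc).symm

lemma coeff_C_general {d : cd.Δ} (p q v s t : cd.M d) :
    cd.coeff (cd.C d p q) d v s
      = if v = p then cd.coeff (cd.C d t s) d t q else 0 := by
  letI := cd.fintypeM d
  rw [cd.coeff_eq_repr _ d v s t]
  have hstar : cd.C d p q * cd.C d s t = cd.star (cd.C d t s * cd.C d q p) := by
    rw [cd.star_mul, cd.star_C, cd.star_C]
  rw [hstar, cd.repr_star, cd.repr_mul (cd.C d t s) d q p ⟨d, (t, v)⟩ (cd.not_lt_self d)]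
  by_cases hv : v = p
  · subst hv
    rw [if_pos rfl]
    refine Finset.sum_eq_single t (fun u _ hu => if_neg fun hc => hu (cd.sigma_mk_eq_iff.1 hc).1)
      (fun h => absurd (Finset.mem_univ _) h) |>.trans (if_pos rfl)
  · rw [if_neg hv]
    exact Finset.sum_eq_zero fun u _ => if_neg fun hc => hv (cd.sigma_mk_eq_iff.1 hc).2.symm

lemma rd_symm (d : cd.Δ) (s q : cd.M d) : rd cd d s q = rd cd d q s := by
  show cd.coeff (cd.C d q q) d q s = _
  rw [cd.coeff_C_general q q q s s, if_pos rfl]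
  rfl

lemma coeff_C_self {d : cd.Δ} (p q v s : cd.M d) :
    cd.coeff (cd.C d p q) d v s = if v = p then rd cd d s q else 0 := by
  rw [cd.coeff_C_general p q v s s, cd.rd_symm d s q]
  rfl

lemma coeff_algebraMap (k : K) (d : cd.Δ) (s' s : cd.M d) :
    cd.coeff (algebraMap K A k) d s' s = if s' = s then k else 0 := by
  rw [cd.coeff_eq_repr _ d s' s s, ← Algebra.smul_def, ← cd.basis_eq, map_smul,
    Finsupp.smul_apply, Module.Basis.repr_self, Finsupp.single_apply, smul_eq_mul]
  by_cases h : s' = s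
  · subst h; rw [if_pos rfl, if_pos rfl, mul_one]
  · rw [if_neg (fun hc => h (cd.sigma_mk_eq_iff.1 hc).1.symm), if_neg h, mul_zero]

/-- The standard basis vector `v_p` of the cell module. -/
noncomputable def delta (d : cd.Δ) (p : cd.M d) : cd.M d → K := fun u => if u = p then 1 else 0

lemma cellForm_apply_delta (d : cd.Δ) (x : cd.M d → K) (q : cd.M d) :
    cellForm cd d x (cd.delta d q)
      = (@Finset.univ (cd.M d) (cd.fintypeM d)).sum (fun s => rd cd d s q * x s) := by
  letI := cd.fintypeM d

  unfold cellForm delta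
  refine Finset.sum_congr rfl fun s _ => ?_
  refine (Finset.sum_eq_single q (fun t _ ht => ?_) (fun h => absurd (Finset.mem_univ _) h)).trans ?_
  · rw [if_neg ht, mul_zero]
  · rw [if_pos rfl, mul_one]

lemma cellForm_delta_delta (d : cd.Δ) (s q : cd.M d) :
    cellForm cd d (cd.delta d s) (cd.delta d q) = rd cd d s q := by
  letI := cd.fintypeM d

  rw [cd.cellForm_apply_delta]
  refine (Finset.sum_eq_single s (fun u _ hu => ?_) (fun h => absurd (Finset.mem_univ _) h)).trans ?_
  · show rd cd d u q * (if u = s then (1:K) else 0) = 0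
    rw [if_neg hu, mul_zero]
  · show rd cd d s q * (if s = s then (1:K) else 0) = _
    rw [if_pos rfl, mul_one]

lemma cellForm_expand (d : cd.Δ) (v w : cd.M d → K) :
    cellForm cd d v w
      = (@Finset.univ (cd.M d) (cd.fintypeM d)).sum
          (fun q => cellForm cd d v (cd.delta d q) * w q) := by
  letI := cd.fintypeM d
  have hterm : ∀ q : cd.M d, cellForm cd d v (cd.delta d q) * w q
      = (@Finset.univ (cd.M d) (cd.fintypeM d)).sum (fun s => rd cd d s q * v s * w q) := by
    intro q
    rw [cd.cellForm_apply_delta, Finset.sum_mul]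
  refine Eq.symm ?_
  calc (@Finset.univ (cd.M d) (cd.fintypeM d)).sum (fun q => cellForm cd d v (cd.delta d q) * w q)
      = (@Finset.univ (cd.M d) (cd.fintypeM d)).sum (fun q =>
          (@Finset.univ (cd.M d) (cd.fintypeM d)).sum (fun s => rd cd d s q * v s * w q)) :=
        Finset.sum_congr rfl fun q _ => hterm q
    _ = (@Finset.univ (cd.M d) (cd.fintypeM d)).sum (fun s =>
          (@Finset.univ (cd.M d) (cd.fintypeM d)).sum (fun q => rd cd d s q * v s * w q)) :=
        Finset.sum_comm
    _ = cellForm cd d v w := rfl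

lemma cellForm_smul_left (d : cd.Δ) (k : K) (v w : cd.M d → K) :
    cellForm cd d (k • v) w = k * cellForm cd d v w := by
  unfold cellForm
  rw [Finset.mul_sum]
  refine Finset.sum_congr rfl fun s _ => ?_
  rw [Finset.mul_sum]
  refine Finset.sum_congr rfl fun t _ => ?_
  show rd cd d s t * (k * v s) * w t = _
  ring

lemma exists_rd_ne_zero (d : cd.Δ) (h : ∃ x y : cd.M d → K, cellForm cd d x y ≠ 0) :
    ∃ s t : cd.M d, rd cd d s t ≠ 0 := by
  by_contra h0
  push_neg at h0
  obtain ⟨x, y, hxy⟩ := h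
  exact hxy (Finset.sum_eq_zero fun s _ => Finset.sum_eq_zero fun t _ => by
    rw [h0, zero_mul, zero_mul])

lemma exists_form_delta_ne_zero (d : cd.Δ) {v : cd.M d → K}
    (h : ∃ w, cellForm cd d v w ≠ 0) :
    ∃ q, cellForm cd d v (cd.delta d q) ≠ 0 := by
  by_contra h0
  push_neg at h0
  obtain ⟨w, hw⟩ := h
  apply hw
  rw [cd.cellForm_expand]
  exact Finset.sum_eq_zero fun q _ => by rw [h0, zero_mul]

lemma sum_delta_smul (d : cd.Δ) (x : cd.M d → K) :
    (@Finset.univ (cd.M d) (cd.fintypeM d)).sum (fun p => x p • cd.delta d p) = x := by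
  letI := cd.fintypeM d

  funext u
  rw [Finset.sum_apply]
  refine (Finset.sum_eq_single u (fun p _ hp => ?_) (fun h => absurd (Finset.mem_univ _) h)).trans ?_
  · show x p * (if u = p then (1:K) else 0) = 0
    rw [if_neg (fun hc => hp hc.symm), mul_zero]
  · show x u * (if u = u then (1:K) else 0) = x u
    rw [if_pos rfl, mul_one]

section Action

variable [instW : ∀ d : cd.Δ, Module A (cd.M d → K)]
lemma act_C (hact : ∀ (d : cd.Δ) (a : A) (x : cd.M d → K), a • x = cellAct cd d a x) (d : cd.Δ) (p q : cd.M d) (x : cd.M d → K) :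
    cd.C d p q • x = cellForm cd d x (cd.delta d q) • cd.delta d p := by
  letI := cd.fintypeM d

  rw [hact]
  funext s'
  show (@Finset.univ (cd.M d) (cd.fintypeM d)).sum
      (fun s => cd.coeff (cd.C d p q) d s' s * x s) = _
  rw [Pi.smul_apply, smul_eq_mul, cd.cellForm_apply_delta]
  unfold delta
  by_cases h : s' = p
  · rw [if_pos h, mul_one]
    refine Finset.sum_congr rfl fun s _ => ?_
    rw [cd.coeff_C_self, if_pos h]
  · rw [if_neg h, mul_zero]
    exact Finset.sum_eq_zero fun s _ => by rw [cd.coeff_C_self, if_neg h, zero_mul]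

lemma act_C_of_not_le (hact : ∀ (d : cd.Δ) (a : A) (x : cd.M d → K), a • x = cellAct cd d a x) {d e : cd.Δ} (h : ¬ cd.po.le d e) (p q : cd.M e)
    (x : cd.M d → K) :
    cd.C e p q • x = 0 := by
  letI := cd.fintypeM d

  rw [hact]
  funext s'
  show (@Finset.univ (cd.M d) (cd.fintypeM d)).sum
      (fun s => cd.coeff (cd.C e p q) d s' s * x s) = 0
  exact Finset.sum_eq_zero fun s _ => by rw [cd.coeff_C_of_not_le h, zero_mul]

lemma algebraMap_smul_eq (hact : ∀ (d : cd.Δ) (a : A) (x : cd.M d → K), a • x = cellAct cd d a x) (d : cd.Δ) (k : K) (x : cd.M d → K) :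
    (algebraMap K A k) • x = k • x := by
  letI := cd.fintypeM d

  rw [hact]
  funext s'
  show (@Finset.univ (cd.M d) (cd.fintypeM d)).sum
      (fun s => cd.coeff (algebraMap K A k) d s' s * x s) = k * x s'
  refine (Finset.sum_eq_single s' (fun s _ hs => ?_) (fun h => absurd (Finset.mem_univ _) h)).trans ?_
  · rw [cd.coeff_algebraMap, if_neg (fun hc => hs hc.symm), zero_mul]
  · rw [cd.coeff_algebraMap, if_pos rfl]

lemma k_smul_mem (hact : ∀ (d : cd.Δ) (a : A) (x : cd.M d → K), a • x = cellAct cd d a x) {d : cd.Δ} {N : Submodule A (cd.M d → K)} (k : K) {x : cd.M d → K}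
    (hx : x ∈ N) : k • x ∈ N := by
  rw [← cd.algebraMap_smul_eq hact d k x]
  exact N.smul_mem _ hx

end Action

end CellularDatum

lemma fin_exists_transition {m : ℕ} (P : Fin (m + 1) → Prop) (h0 : ¬ P 0)
    (hl : P (Fin.last m)) : ∃ i : Fin m, ¬ P i.castSucc ∧ P i.succ := by
  by_contra h
  push_neg at h
  have hall : ∀ i : Fin (m + 1), ¬ P i := by
    intro i
    induction i using Fin.induction with
    | zero => exact h0
    | succ i ih => exact h i ih
  exact hall _ hl

end Aux

/-- Graham–Lehrer (Prop. 3.6): the decomposition matrix of a cellular algebra over an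
algebraically closed field is upper unitriangular. For cell module `W(d)` and
irreducible `L(e) = W(e)/Rad(e)` (`e ∈ Δ⁰`): the composition multiplicity
`[W(d):L(e)]` vanishes unless `d ≤ e`, and `[W(d):L(d)] = 1`. Multiplicities are
expressed via an arbitrary composition series `c` of `W(d)`. -/
theorem decomposition_matrix_unitriangular
    (K : Type) [Field K] [IsAlgClosed K] (A : Type) [Ring A] [Algebra K A]
    (cd : CellularDatum K A)
    [instW : ∀ d : cd.Δ, Module A (cd.M d → K)]
    (hact : ∀ (d : cd.Δ) (a : A) (x : cd.M d → K), a • x = cellAct cd d a x)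
    (Rad : (d : cd.Δ) → Submodule A (cd.M d → K))
    (hRad : ∀ (d : cd.Δ) (v : cd.M d → K),
      v ∈ Rad d ↔ ∀ w : cd.M d → K, cellForm cd d v w = 0)
    (d e : cd.Δ)
    (he : ∃ x y : cd.M e → K, cellForm cd e x y ≠ 0)
    (m : ℕ) (c : Fin (m + 1) → Submodule A (cd.M d → K))
    (h0 : c 0 = ⊥) (htop : c (Fin.last m) = ⊤) (hmono : StrictMono c)
    (hsimple : ∀ i : Fin m,
      IsSimpleModule A (Factor (c i.castSucc) (c i.succ))) :
    (¬ cd.po.le d e → ∀ i : Fin m,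
        ¬ Nonempty (Factor (c i.castSucc) (c i.succ) ≃ₗ[A] ((cd.M e → K) ⧸ Rad e)))
    ∧ ((∃ x y : cd.M d → K, cellForm cd d x y ≠ 0) →
        (Finset.univ.filter (fun i : Fin m =>
          Nonempty (Factor (c i.castSucc) (c i.succ) ≃ₗ[A]
            ((cd.M d → K) ⧸ Rad d)))).card = 1) := by
  constructor
  · -- Part 1: triangularity
    rintro hne i ⟨f⟩
    obtain ⟨s, t, hst⟩ := cd.exists_rd_ne_zero e he
    have hts : rd cd e t s ≠ 0 := by rw [cd.rd_symm]; exact hst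
    set a : A := cd.C e t s with ha
    have hkill : ∀ x : cd.M d → K, a • x = 0 := fun x => cd.act_C_of_not_le hact hne t s x
    have hdelta_notmem : rd cd e t s • cd.delta e t ∉ Rad e := by
      rw [hRad]
      push_neg
      refine ⟨cd.delta e s, ?_⟩
      rw [cd.cellForm_smul_left, cd.cellForm_delta_delta]
      exact mul_ne_zero hts hts
    have hLa : a • Submodule.Quotient.mk (p := Rad e) (cd.delta e t) ≠ 0 := by
      rw [← Submodule.Quotient.mk_smul, cd.act_C hact e t s (cd.delta e t),
        cd.cellForm_delta_delta, Ne, Submodule.Quotient.mk_eq_zero]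
      exact hdelta_notmem
    apply hLa
    have hz : ∀ z : Factor (c i.castSucc) (c i.succ), a • z = 0 := by
      intro z
      obtain ⟨x, rfl⟩ := Submodule.mkQ_surjective _ z
      rw [← map_smul]
      have hx0 : (a • x : ↥(c i.succ)) = 0 := by
        apply Subtype.ext
        show ((a • x : ↥(c i.succ)) : cd.M d → K) = 0
        rw [SetLike.val_smul]
        exact hkill x
      rw [hx0, map_zero]
    have h1 := hz (f.symm (Submodule.Quotient.mk (cd.delta e t)))
    have h2 := congrArg f h1
    rwa [map_smul, f.apply_symm_apply, map_zero] at h2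
  · -- Part 2: multiplicity one on the diagonal
    intro hd
    obtain ⟨s, t, hst⟩ := cd.exists_rd_ne_zero d hd
    have hts : rd cd d t s ≠ 0 := by rw [cd.rd_symm]; exact hst
    set a : A := cd.C d t s with ha
    have hdt : cd.delta d t ∉ Rad d := by
      rw [hRad]
      push_neg
      refine ⟨cd.delta d s, ?_⟩
      rw [cd.cellForm_delta_delta]
      exact hts
    have hax : ∀ x : cd.M d → K, a • x = cellForm cd d x (cd.delta d s) • cd.delta d t :=
      fun x => cd.act_C hact d t s x
    -- L(d) is simple
    haveI hLnt : Nontrivial ((cd.M d → K) ⧸ Rad d) := by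
      refine ⟨Submodule.Quotient.mk (cd.delta d t), 0, ?_⟩
      rw [Ne, Submodule.Quotient.mk_eq_zero]
      exact hdt
    haveI hSubNt : Nontrivial (Submodule A ((cd.M d → K) ⧸ Rad d)) :=
      (Submodule.nontrivial_iff A).2 hLnt
    haveI hLsimple : IsSimpleModule A ((cd.M d → K) ⧸ Rad d) := by
      refine (isSimpleModule_iff A _).2 ⟨fun N => ?_⟩
      by_cases hN : N = ⊥
      · left; exact hN
      right
      obtain ⟨z, hzN, hz0⟩ := (Submodule.ne_bot_iff N).1 hN
      obtain ⟨v, rfl⟩ := Submodule.mkQ_surjective (Rad d) z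
      have hvR : v ∉ Rad d := fun hv => hz0 ((Submodule.Quotient.mk_eq_zero _).2 hv)
      have hvform : ∃ w, cellForm cd d v w ≠ 0 := by
        rw [hRad] at hvR
        push_neg at hvR
        exact hvR
      obtain ⟨q, hq⟩ := cd.exists_form_delta_ne_zero d hvform
      have hvN' : v ∈ N.comap (Rad d).mkQ := hzN
      have hdeltas : ∀ p : cd.M d, cd.delta d p ∈ N.comap (Rad d).mkQ := by
        intro p
        have h1 : cd.C d p q • v ∈ N.comap (Rad d).mkQ :=
          Submodule.smul_mem _ _ hvN'
        rw [cd.act_C hact d p q v] at h1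
        have h2 := cd.k_smul_mem hact (cellForm cd d v (cd.delta d q))⁻¹ h1
        rwa [smul_smul, inv_mul_cancel₀ hq, one_smul] at h2
      have hN' : ∀ x : cd.M d → K, x ∈ N.comap (Rad d).mkQ := by
        intro x
        rw [← cd.sum_delta_smul d x]
        exact Submodule.sum_mem _ fun p _ => cd.k_smul_mem hact (x p) (hdeltas p)
      rw [eq_top_iff]
      rintro z -
      obtain ⟨v', rfl⟩ := Submodule.mkQ_surjective (Rad d) z
      exact hN' v'
    -- transport of nontrivial action through an isomorphism
    have hwit : ∀ i : Fin m,
        Nonempty (Factor (c i.castSucc) (c i.succ) ≃ₗ[A] ((cd.M d → K) ⧸ Rad d)) →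
        ∃ x : cd.M d → K, x ∈ c i.succ ∧ a • x ∉ c i.castSucc := by
      rintro i ⟨f⟩
      obtain ⟨x, hx⟩ := Submodule.mkQ_surjective _
        (f.symm (Submodule.Quotient.mk (cd.delta d t)))
      refine ⟨(x : cd.M d → K), x.2, fun hmem => ?_⟩
      have hzero : a • f.symm (Submodule.Quotient.mk (cd.delta d t)) = 0 := by
        rw [← hx, ← map_smul, Submodule.mkQ_apply, Submodule.Quotient.mk_eq_zero]
        show ((a • x : ↥(c i.succ)) : cd.M d → K) ∈ c i.castSucc
        rw [SetLike.val_smul]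
        exact hmem
      have h2 := congrArg f hzero
      rw [map_smul, f.apply_symm_apply, map_zero] at h2
      rw [← Submodule.Quotient.mk_smul, Submodule.Quotient.mk_eq_zero] at h2
      have h3 := (hRad d _).1 h2 (cd.delta d s)
      rw [hax, cd.cellForm_smul_left, cd.cellForm_delta_delta] at h3
      exact mul_ne_zero hts hts h3
    -- uniqueness
    have huniq : ∀ i j : Fin m, i < j →
        (∃ x : cd.M d → K, x ∈ c i.succ ∧ a • x ∉ c i.castSucc) →
        (∃ x : cd.M d → K, x ∈ c j.succ ∧ a • x ∉ c j.castSucc) → False := by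
      rintro i j hij ⟨x, hx, hxn⟩ ⟨y, hy, hyn⟩
      have hij' : c i.succ ≤ c j.castSucc := by
        apply hmono.monotone
        rw [Fin.le_def, Fin.val_succ, Fin.coe_castSucc]
        exact hij
      have hlx : cellForm cd d x (cd.delta d s) ≠ 0 := by
        intro h0
        apply hxn
        rw [hax, h0, zero_smul]
        exact Submodule.zero_mem _
      have hmemx : a • x ∈ c i.succ := Submodule.smul_mem _ a hx
      have hdtmem : cd.delta d t ∈ c j.castSucc := by
        have h1 := cd.k_smul_mem hact (cellForm cd d x (cd.delta d s))⁻¹ hmemx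
        rw [hax, smul_smul, inv_mul_cancel₀ hlx, one_smul] at h1
        exact hij' h1
      apply hyn
      rw [hax]
      exact cd.k_smul_mem hact _ hdtmem
    -- existence
    have hPl : ¬ (c (Fin.last m) ≤ Rad d) := by
      rw [htop]
      intro hle
      exact hdt (hle Submodule.mem_top)
    have hP0 : ¬ ¬ (c 0 ≤ Rad d) := not_not.2 (h0 ▸ bot_le)
    obtain ⟨i₀, hi₀c, hi₀s⟩ :=
      fin_exists_transition (fun j => ¬ (c j ≤ Rad d)) hP0 hPl
    rw [not_not] at hi₀c
    haveI := hsimple i₀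
    have hker : Submodule.comap (c i₀.succ).subtype (c i₀.castSucc)
        ≤ LinearMap.ker ((Rad d).mkQ.comp (c i₀.succ).subtype) := by
      intro x hx
      rw [LinearMap.mem_ker, LinearMap.comp_apply, Submodule.mkQ_apply,
        Submodule.Quotient.mk_eq_zero]
      exact hi₀c hx
    set g : Factor (c i₀.castSucc) (c i₀.succ) →ₗ[A] ((cd.M d → K) ⧸ Rad d) :=
      Submodule.liftQ _ ((Rad d).mkQ.comp (c i₀.succ).subtype) hker with hg
    obtain ⟨v, hv, hvR⟩ := SetLike.not_le_iff_exists.1 hi₀s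
    have hgne : g ≠ 0 := by
      intro hg0
      have hev : g (Submodule.Quotient.mk ⟨v, hv⟩) = (Rad d).mkQ v := rfl
      rw [hg0] at hev
      have : v ∈ Rad d := by
        rw [← Submodule.Quotient.mk_eq_zero, ← Submodule.mkQ_apply, ← hev]
        rfl
      exact hvR this
    have hbij := LinearMap.bijective_of_ne_zero hgne
    have hi₀ : Nonempty (Factor (c i₀.castSucc) (c i₀.succ) ≃ₗ[A] ((cd.M d → K) ⧸ Rad d)) :=
      ⟨LinearEquiv.ofBijective g hbij⟩
    rw [Finset.card_eq_one]
    refine ⟨i₀, ?_⟩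
    rw [Finset.eq_singleton_iff_unique_mem]
    refine ⟨Finset.mem_filter.2 ⟨Finset.mem_univ _, hi₀⟩, fun j hj => ?_⟩
    have hj' := (Finset.mem_filter.1 hj).2
    by_contra hne
    rcases lt_or_gt_of_ne hne with h | h
    · exact huniq j i₀ h (hwit j hj') (hwit i₀ hi₀)
    · exact huniq i₀ j h (hwit i₀ hi₀) (hwit j hj')
end

section
/- Suppose q is a root of unity with ℓ minimal such that q^{2ℓ}=1, ℓ > k ≥ 2, and let d ∈ Δ_{n,k} be critical, i.e. [d+1]_q = 0. Then the Gram determinant det G_{n,k}^d = ∏_{j=1}^{⌊k/2⌋} ([j]_q/[k−j+1]_q)^{dim S_{n,k−2j}^d} · ∏_{j=1}^{(n+k−d)/2} ([d+j+1]_q/[j]_q)^{dim S_{n,k}^{d+2j}} is nonzero. -/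
/-- The ratio `[a]_q/[b]_q`, interpreted as a limit when `[b]_q = 0`:
when `[b]_q = 0` (so `ℓ ∣ b`, and `ℓ ∣ a` in the relevant cases) the value is
`[a/ℓ]_{q^ℓ} / [b/ℓ]_{q^ℓ}`. -/
noncomputable def qratio (q : ℂ) (ℓ a b : ℕ) : ℂ :=
  if qnum q b = 0 then qnum (q ^ ℓ) (a / ℓ) / qnum (q ^ ℓ) (b / ℓ)
  else qnum q a / qnum q b

/-- The Gram determinant `det G_{n,k}^d` of Morin-Duchesne–Ridout–Rasmussen, with
ratios interpreted as limits. -/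
noncomputable def gramDet (q : ℂ) (ℓ n k d : ℕ) : ℂ :=
  (∏ j ∈ Finset.Icc 1 (k / 2),
      (qnum q j / qnum q (k - j + 1)) ^ (dimSeam n (k - 2 * j) d).toNat) *
    ∏ j ∈ Finset.Icc 1 ((n + k - d) / 2),
      (qratio q ℓ (d + j + 1) j) ^ (dimSeam n k (d + 2 * j)).toNat

lemma qnum_eq_s18 (q : ℂ) (hq : q ≠ 0) (m : ℕ) :
    qnum q m = q ^ ((m : ℤ) - 1) * ∑ j ∈ Finset.range m, ((q ^ 2)⁻¹) ^ j := by
  unfold qnum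
  rw [Finset.mul_sum]
  refine Finset.sum_congr rfl fun j _ => ?_
  rw [sub_eq_add_neg ((m : ℤ) - 1), zpow_add₀ hq]
  congr 1
  rw [← zpow_natCast ((q ^ 2)⁻¹) j, inv_zpow, ← zpow_neg, ← zpow_natCast q 2, ← zpow_mul]
  ring_nf

lemma qnum_eq_zero_iff (q : ℂ) (hq : q ≠ 0) (hq2 : q ^ 2 ≠ 1) (m : ℕ) :
    qnum q m = 0 ↔ q ^ (2 * m) = 1 := by
  have hx : ((q ^ 2)⁻¹ : ℂ) ≠ 1 := by
    intro h; exact hq2 (by field_simp at h; simpa using h.symm)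
  rw [qnum_eq_s18 q hq, geom_sum_eq hx]
  rw [mul_eq_zero, div_eq_zero_iff, sub_eq_zero, sub_eq_zero]
  constructor
  · rintro (h | h | h)
    · exact absurd h (zpow_ne_zero _ hq)
    · rw [inv_pow, inv_eq_one, ← pow_mul] at h
      exact h
    · exact absurd h hx
  · intro h
    right; left
    rw [inv_pow, inv_eq_one, ← pow_mul]
    exact h

lemma qnum_sq_one (q : ℂ) (hq : q ≠ 0) (hq2 : q ^ 2 = 1) (m : ℕ) :
    qnum q m = q ^ ((m : ℤ) - 1) * m := by
  rw [qnum_eq_s18 q hq, hq2]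
  simp

lemma pow_two_mul_eq_one_iff (q : ℂ) (ℓ : ℕ) (hℓ : 0 < ℓ)
    (hroot : q ^ (2 * ℓ) = 1) (hmin : ∀ j : ℕ, 0 < j → q ^ (2 * j) = 1 → ℓ ≤ j)
    (m : ℕ) : q ^ (2 * m) = 1 ↔ ℓ ∣ m := by
  constructor
  · intro h
    rcases Nat.eq_zero_or_pos (m % ℓ) with hr | hr
    · exact Nat.dvd_of_mod_eq_zero hr
    · exfalso
      have : q ^ (2 * (m % ℓ)) = 1 := by
        have h2 : q ^ (2 * m) = q ^ ((2 * ℓ) * (m / ℓ)) * q ^ (2 * (m % ℓ)) := by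
          rw [← pow_add]
          congr 1
          conv_lhs => rw [← Nat.div_add_mod m ℓ]
          ring
        rw [h2, pow_mul, hroot, one_pow, one_mul] at h
        exact h
      exact absurd (hmin _ hr this) (not_le.mpr (Nat.mod_lt m hℓ))
  · rintro ⟨c, rfl⟩
    rw [show 2 * (ℓ * c) = (2 * ℓ) * c by ring, pow_mul, hroot, one_pow]

/-- If `q` is a root of unity with `ℓ` minimal such that `q^{2ℓ} = 1`, `2 ≤ k < ℓ`,
and `d ∈ Δ_{n,k}` is critical (`[d+1]_q = 0`), then the Gram determinant
`det G_{n,k}^d` is nonzero. -/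
theorem gramDet_ne_zero_of_critical (q : ℂ) (hq : q ≠ 0) (ℓ : ℕ) (hℓ : 0 < ℓ)
    (hroot : q ^ (2 * ℓ) = 1) (hmin : ∀ j : ℕ, 0 < j → q ^ (2 * j) = 1 → ℓ ≤ j)
    (n k d : ℕ) (hn : 1 ≤ n) (hk : 2 ≤ k) (hkℓ : k < ℓ)
    (hd : d ≤ n + k) (hpar : d % 2 = (n + k) % 2) (hnd : k ≤ n + d)
    (hcrit : qnum q (d + 1) = 0) :
    gramDet q ℓ n k d ≠ 0 := by
  have hq2 : q ^ 2 ≠ 1 := by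
    intro h
    have := hmin 1 one_pos (by rw [mul_one]; exact h)
    omega
  have hzero : ∀ m : ℕ, qnum q m = 0 ↔ ℓ ∣ m := fun m =>
    (qnum_eq_zero_iff q hq hq2 m).trans (pow_two_mul_eq_one_iff q ℓ hℓ hroot hmin m)
  have hne : ∀ m : ℕ, ¬ ℓ ∣ m → qnum q m ≠ 0 := fun m h hc => h ((hzero m).mp hc)
  have hd1 : ℓ ∣ d + 1 := (hzero (d + 1)).mp hcrit
  have hql0 : (q ^ ℓ : ℂ) ≠ 0 := pow_ne_zero _ hq
  have hql2 : (q ^ ℓ) ^ 2 = 1 := by rw [← pow_mul, mul_comm]; exact hroot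
  have hqlnum : ∀ m : ℕ, 0 < m → qnum (q ^ ℓ) m ≠ 0 := by
    intro m hm
    rw [qnum_sq_one _ hql0 hql2]
    exact mul_ne_zero (zpow_ne_zero _ hql0) (Nat.cast_ne_zero.mpr hm.ne')
  unfold gramDet
  apply mul_ne_zero
  · rw [Finset.prod_ne_zero_iff]
    intro j hj
    rw [Finset.mem_Icc] at hj
    apply pow_ne_zero
    apply div_ne_zero
    · exact hne j (fun hdvd => by have := Nat.le_of_dvd (by omega) hdvd; omega)
    · exact hne (k - j + 1) (fun hdvd => by
        have := Nat.le_of_dvd (by omega) hdvd; omega)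
  · rw [Finset.prod_ne_zero_iff]
    intro j hj
    rw [Finset.mem_Icc] at hj
    apply pow_ne_zero
    unfold qratio
    split_ifs with h
    · have hj' : ℓ ∣ j := (hzero j).mp h
      have hdj : ℓ ∣ d + j + 1 := by
        have : d + j + 1 = (d + 1) + j := by ring
        rw [this]; exact Nat.dvd_add hd1 hj'
      apply div_ne_zero
      · exact hqlnum _ (Nat.div_pos (Nat.le_of_dvd (by omega) hdj) hℓ)
      · exact hqlnum _ (Nat.div_pos (Nat.le_of_dvd (by omega) hj') hℓ)
    · apply div_ne_zero
      · apply hne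
        intro hdvd
        apply h
        rw [hzero]
        have : d + j + 1 = (d + 1) + j := by ring
        rw [this] at hdvd
        exact (Nat.dvd_add_right hd1).mp hdvd
      · exact h
end
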